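/- arXiv:2110.01881 — 6 statements merged into one kernel-verified Lean document; each statement's English description precedes it below -/
import Mathlib

section
/- Let n ≥ 2, let X₁,…,Xₙ be ultrametrizable spaces with pseudo-ultrametrics dᵢ on Xᵢ, let r be a pseudo-ultrametric on {1,…,n}, and fix base points pᵢ ∈ Xᵢ. Define D on the disjoint union ⨿ᵢ Xᵢ by D(x,y) = dᵢ(x,y) if x,y ∈ Xᵢ, and D(x,y) = max{dᵢ(x,pᵢ), r(i,j), dⱼ(pⱼ,y)} if x ∈ Xᵢ, y ∈ Xⱼ with i ≠ j. Then D is a pseudo-ultrametric on ⨿ᵢ Xᵢ; if each dᵢ is an ultrametric generating the topology of Xᵢ and r is an ultrametric, then D is an ultrametric generating the direct sum topology. -/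
open Set

/-- Amalgamation of pseudo-ultrametrics along base points: `D` is a pseudo-ultrametric on the disjoint
union; if moreover the `dᵢ` and `r` are ultrametrics generating the topologies, then `D` is an ultrametric
generating the direct sum topology. -/
theorem stmt5 {n : ℕ} (hn : 2 ≤ n) (X : Fin n → Type) [∀ i, TopologicalSpace (X i)]
    (d : ∀ i, X i → X i → ℝ)
    (hd0 : ∀ i x, d i x x = 0)
    (hdsymm : ∀ i x y, d i x y = d i y x)
    (hdnonneg : ∀ i x y, 0 ≤ d i x y)
    (hdtri : ∀ i x y z, d i x z ≤ max (d i x y) (d i y z))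
    (r : Fin n → Fin n → ℝ)
    (hr0 : ∀ i, r i i = 0)
    (hrsymm : ∀ i j, r i j = r j i)
    (hrnonneg : ∀ i j, 0 ≤ r i j)
    (hrtri : ∀ i j k, r i k ≤ max (r i j) (r j k))
    (p : ∀ i, X i)
    (D : ((i : Fin n) × X i) → ((i : Fin n) × X i) → ℝ)
    (hD1 : ∀ i (x y : X i), D ⟨i, x⟩ ⟨i, y⟩ = d i x y)
    (hD2 : ∀ i j (x : X i) (y : X j), i ≠ j →
      D ⟨i, x⟩ ⟨j, y⟩ = max (d i x (p i)) (max (r i j) (d j (p j) y))) :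
    ((∀ a, D a a = 0) ∧ (∀ a b, D a b = D b a) ∧ (∀ a b, 0 ≤ D a b) ∧
      (∀ a b c, D a c ≤ max (D a b) (D b c))) ∧
    (((∀ i (x y : X i), d i x y = 0 → x = y) ∧ (∀ i j, r i j = 0 → i = j) ∧
        (∀ i (s : Set (X i)), IsOpen s ↔ ∀ x ∈ s, ∃ ε > 0, {y | d i x y < ε} ⊆ s)) →
      ((∀ a b, D a b = 0 → a = b) ∧
        (∀ s : Set ((i : Fin n) × X i),
          IsOpen s ↔ ∀ a ∈ s, ∃ ε > 0, {b | D a b < ε} ⊆ s))) := by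

  have hDnonneg : ∀ a b, 0 ≤ D a b := by
    rintro ⟨i, x⟩ ⟨j, y⟩
    rcases eq_or_ne i j with h | h
    · subst h; rw [hD1]; exact hdnonneg i x y
    · rw [hD2 i j x y h]; exact le_max_of_le_left (hdnonneg i x (p i))
  constructor
  · refine ⟨?_, ?_, hDnonneg, ?_⟩
    · rintro ⟨i, x⟩; rw [hD1]; exact hd0 i x
    · rintro ⟨i, x⟩ ⟨j, y⟩
      rcases eq_or_ne i j with h | h
      · subst h; rw [hD1, hD1, hdsymm]
      · rw [hD2 i j x y h, hD2 j i y x h.symm, hdsymm j y (p j), hdsymm i x (p i),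
          hrsymm i j]
        simp [max_comm, max_left_comm, max_assoc]
    · rintro ⟨i, x⟩ ⟨j, y⟩ ⟨k, z⟩
      rcases eq_or_ne i j with hij | hij <;> rcases eq_or_ne j k with hjk | hjk
      · subst hij; subst hjk
        rw [hD1, hD1, hD1]; exact hdtri i x y z
      · subst hij
        rw [hD1, hD2 _ _ _ _ hjk, hD2 _ _ _ _ hjk]
        apply max_le
        · exact (hdtri i x y (p i)).trans (max_le_max le_rfl (le_max_left _ _))
        · exact le_max_of_le_right (le_max_of_le_right le_rfl)
      · subst hjk
        rw [hD1, hD2 _ _ _ _ hij, hD2 _ _ _ _ hij]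
        apply max_le
        · exact le_max_of_le_left (le_max_left _ _)
        · apply max_le
          · exact le_max_of_le_left (le_max_of_le_right (le_max_left _ _))
          · have h1 := hdtri j (p j) y z
            exact h1.trans (max_le_max (le_max_of_le_right (le_max_right _ _)) le_rfl)
      · rcases eq_or_ne i k with hik | hik
        · subst hik
          rw [hD1, hD2 _ _ _ _ hij, hD2 _ _ _ _ (Ne.symm hij)]
          have h1 := hdtri i x (p i) z
          refine h1.trans (max_le ?_ ?_)
          · exact le_max_of_le_left (le_max_left _ _)
          · exact le_max_of_le_right (le_max_of_le_right (le_max_right _ _))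
        · rw [hD2 _ _ _ _ hik, hD2 _ _ _ _ hij, hD2 _ _ _ _ hjk]
          apply max_le
          · exact le_max_of_le_left (le_max_left _ _)
          apply max_le
          · have h1 := hrtri i j k
            rw [le_max_iff] at h1
            rcases h1 with h1 | h1
            · exact le_max_of_le_left (le_max_of_le_right (le_max_of_le_left h1))
            · exact le_max_of_le_right (le_max_of_le_right (le_max_of_le_left h1))
          · exact le_max_of_le_right (le_max_of_le_right (le_max_right _ _))
  · rintro ⟨hsd, hsr, hTop⟩
    have hne : Nonempty (Fin n) := ⟨⟨0, by omega⟩⟩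
    constructor
    · rintro ⟨i, x⟩ ⟨j, y⟩ h
      rcases eq_or_ne i j with hij | hij
      · subst hij
        rw [hD1] at h
        exact congrArg _ (hsd i x y h)
      · exfalso
        rw [hD2 i j x y hij] at h
        have h1 : r i j ≤ 0 := h ▸ le_max_of_le_right (le_max_left _ _)
        exact hij (hsr i j (le_antisymm h1 (hrnonneg i j)))
    · intro s
      constructor
      · intro hs
        rintro ⟨i, x⟩ hax
        rw [isOpen_sigma_iff] at hs
        obtain ⟨ε₁, hε₁, hball⟩ := (hTop i _).mp (hs i) x hax
        set f : Fin n → ℝ := fun j => if j = i then ε₁ else r i j with hf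
        set ε := Finset.univ.inf' Finset.univ_nonempty f with hε
        have hεpos : 0 < ε := by
          rw [hε, Finset.lt_inf'_iff]
          intro j _
          rw [hf]
          dsimp only
          split
          · exact hε₁
          · next hj =>
            exact lt_of_le_of_ne (hrnonneg i j) (fun e => hj (hsr i j e.symm).symm)
        refine ⟨ε, hεpos, ?_⟩
        rintro ⟨j, y⟩ hb
        simp only [mem_setOf_eq] at hb
        rcases eq_or_ne j i with hji | hji
        · subst hji
          rw [hD1] at hb
          have hle : ε ≤ ε₁ := by
            have h2 : ε ≤ f j := Finset.inf'_le f (Finset.mem_univ j)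
            have h3 : f j = ε₁ := by simp [hf]
            exact h3 ▸ h2
          exact hball (lt_of_lt_of_le hb hle)
        · exfalso
          rw [hD2 i j x y (Ne.symm hji)] at hb
          have hle : ε ≤ r i j := by
            have h2 : ε ≤ f j := Finset.inf'_le f (Finset.mem_univ j)
            have h3 : f j = r i j := by simp [hf, hji]
            exact h3 ▸ h2
          have : r i j ≤ max (d i x (p i)) (max (r i j) (d j (p j) y)) :=
            le_max_of_le_right (le_max_left _ _)
          linarith
      · intro h
        rw [isOpen_sigma_iff]
        intro i
        rw [hTop]
        intro x hx
        obtain ⟨ε, hε, hb⟩ := h ⟨i, x⟩ hx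
        refine ⟨ε, hε, fun y hy => hb ?_⟩
        show D ⟨i, x⟩ ⟨i, y⟩ < ε
        rw [hD1]; exact hy
end

section
/- Let m = {mᵢ}_{i≥0} be a sequence of integers with mᵢ ≥ 2 and α: ℤ_{≥0} → (0,∞) a strictly decreasing sequence converging to 0. Let S(m) = ∏_{i≥0}{0,…,mᵢ−1} with ultrametric α♯(x,y) = α(min{n : x(n) ≠ y(n)}) (and 0 if x = y). If r > 0 and n ≥ 0 satisfy α(n+1) ≤ r < α(n), then the least cardinality of an r-net of (S(m), α♯) equals m₀·m₁·…·mₙ. -/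
open Metric Set Filter
open scoped ENNReal

def SS (m : ℕ → ℕ) : Type := (i : ℕ) → Fin (m i)

open scoped Classical in
noncomputable def aSharp {m : ℕ → ℕ} (α : ℕ → ℝ) (x y : SS m) : ℝ :=
  if x = y then 0 else α (sInf {n | x n ≠ y n})

theorem aSharp_self {m : ℕ → ℕ} (α : ℕ → ℝ) (x : SS m) : aSharp α x x = 0 := by
  simp [aSharp]

theorem aSharp_pos {m : ℕ → ℕ} (α : ℕ → ℝ) (hpos : ∀ n, 0 < α n) (x y : SS m)
    (h : x ≠ y) : 0 < aSharp α x y := by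
  rw [aSharp, if_neg h]
  exact hpos _

theorem aSharp_nonneg {m : ℕ → ℕ} (α : ℕ → ℝ) (hpos : ∀ n, 0 < α n) (x y : SS m) :
    0 ≤ aSharp α x y := by
  rcases eq_or_ne x y with rfl | h
  · simp [aSharp_self]
  · exact (aSharp_pos α hpos x y h).le

theorem aSharp_comm {m : ℕ → ℕ} (α : ℕ → ℝ) (x y : SS m) : aSharp α x y = aSharp α y x := by
  unfold aSharp
  by_cases h : x = y
  · simp [h]
  · rw [if_neg h, if_neg (Ne.symm h)]
    have hset : {n | x n ≠ y n} = {n | y n ≠ x n} := by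
      ext n; exact ne_comm
    rw [hset]

theorem aSharp_strong {m : ℕ → ℕ} (α : ℕ → ℝ) (hpos : ∀ n, 0 < α n) (hanti : Antitone α)
    (x y z : SS m) : aSharp α x z ≤ max (aSharp α x y) (aSharp α y z) := by
  by_cases hxz : x = z
  · rw [hxz, aSharp_self]
    exact le_max_of_le_left (aSharp_nonneg α hpos z y)
  · by_cases hxy : x = y
    · rw [hxy]
      exact le_max_right _ _
    · by_cases hyz : y = z
      · rw [← hyz]
        exact le_max_left _ _
      · unfold aSharp
        rw [if_neg hxz, if_neg hxy, if_neg hyz]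
        have hC : {n | x n ≠ z n}.Nonempty := Function.ne_iff.mp hxz
        set a := sInf {n | x n ≠ y n} with ha
        set b := sInf {n | y n ≠ z n} with hb
        have key : min a b ≤ sInf {n | x n ≠ z n} := by
          apply le_csInf hC
          intro n hn
          by_contra hlt
          push_neg at hlt
          have hna : n ∉ {k | x k ≠ y k} :=
            Nat.notMem_of_lt_sInf (lt_of_lt_of_le hlt (min_le_left _ _))
          have hnb : n ∉ {k | y k ≠ z k} :=
            Nat.notMem_of_lt_sInf (lt_of_lt_of_le hlt (min_le_right _ _))
          simp only [Set.mem_setOf_eq, not_not] at hna hnb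
          exact hn (hna.trans hnb)
        calc α (sInf {n | x n ≠ z n}) ≤ α (min a b) := hanti key
          _ ≤ max (α a) (α b) := by
              rcases le_total a b with h | h
              · rw [min_eq_left h]; exact le_max_left _ _
              · rw [min_eq_right h]; exact le_max_right _ _


theorem aSharp_le_iff' {m : ℕ → ℕ} (α : ℕ → ℝ) (hanti : StrictAnti α)
    (r : ℝ) (n : ℕ) (h1 : α (n + 1) ≤ r) (h2 : r < α n) (hr : 0 ≤ r) (x y : SS m) :
    aSharp α x y ≤ r ↔ ∀ i < n + 1, x i = y i := by
  rcases eq_or_ne x y with rfl | h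
  · simp [aSharp, hr]
  · rw [aSharp, if_neg h]
    have hC : {k | x k ≠ y k}.Nonempty := Function.ne_iff.mp h
    constructor
    · intro hle i hi
      by_contra hne
      have h3 : sInf {k | x k ≠ y k} ≤ i := csInf_le (OrderBot.bddBelow _) hne
      have h4 : sInf {k | x k ≠ y k} ≤ n := h3.trans (Nat.lt_succ_iff.mp hi)
      exact absurd ((hanti.antitone h4).trans hle) (not_le.mpr h2)
    · intro hall
      have h3 : n + 1 ≤ sInf {k | x k ≠ y k} := by
        apply le_csInf hC
        intro k hk
        by_contra hlt
        exact hk (hall k (not_le.mp hlt))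
      exact (hanti.antitone h3).trans h1

/-- The least cardinality (in `ℝ≥0∞`) of a set `A` of centers of closed balls of radius `r`
(with respect to the distance function `d`) covering `B`. -/
noncomputable def coverNum {X : Type} (d : X → X → ℝ) (B : Set X) (r : ℝ) : ℝ≥0∞ :=
  ⨅ (A : Set X) (_ : B ⊆ ⋃ a ∈ A, {y | d a y ≤ r}), (A.encard : ℝ≥0∞)

/-- If `α(n+1) ≤ r < α(n)`, then the least cardinality of an `r`-net of `(S(m), α♯)`
equals `m₀ ⋯ mₙ`. -/
theorem stmt7 (m : ℕ → ℕ) (α : ℕ → ℝ) (hm : ∀ i, 2 ≤ m i) (hpos : ∀ n, 0 < α n)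
    (hanti : StrictAnti α) (hlim : Tendsto α atTop (nhds 0))
    (r : ℝ) (n : ℕ) (h1 : α (n + 1) ≤ r) (h2 : r < α n) :
    coverNum (aSharp α : SS m → SS m → ℝ) Set.univ r =
      ∏ i ∈ Finset.range (n + 1), (m i : ℝ≥0∞) := by
  have hr : 0 ≤ r := ((hpos (n + 1)).trans_le h1).le
  have hmpos : ∀ i, 0 < m i := fun i => lt_of_lt_of_le two_pos (hm i)
  have hiff := aSharp_le_iff' (m := m) α hanti r n h1 h2 hr
  set T := (i : Fin (n + 1)) → Fin (m (i : ℕ)) with hT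
  let ψ : T → SS m := fun t i => if h : i < n + 1 then t ⟨i, h⟩ else ⟨0, hmpos i⟩
  have hψ : ∀ (t : T) (i : ℕ) (h : i < n + 1), ψ t i = t ⟨i, h⟩ := fun t i h => dif_pos h
  have hcard : ((Fintype.card T : ℕ) : ℝ≥0∞) = ∏ i ∈ Finset.range (n + 1), (m i : ℝ≥0∞) := by
    rw [Fintype.card_pi]
    simp only [Fintype.card_fin]
    push_cast
    exact Fin.prod_univ_eq_prod_range (fun i => (m i : ℝ≥0∞)) (n + 1)
  have hencard : (((Set.univ : Set T).encard : ℝ≥0∞)) = ∏ i ∈ Finset.range (n + 1), (m i : ℝ≥0∞) := by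
    rw [Set.encard_univ, ENat.card_eq_coe_fintype_card, ← hcard]
    simp
  apply le_antisymm
  · -- upper bound
    have hcover : (Set.univ : Set (SS m)) ⊆ ⋃ a ∈ Set.range ψ, {y | aSharp α a y ≤ r} := by
      intro x _
      refine Set.mem_iUnion₂.mpr ⟨ψ (fun i => x (i : ℕ)), ⟨fun i => x (i : ℕ), rfl⟩, ?_⟩
      rw [Set.mem_setOf_eq, hiff]
      intro i hi
      exact hψ (fun j => x (j : ℕ)) i hi
    refine le_trans (iInf_le_of_le (Set.range ψ) (iInf_le _ hcover)) ?_
    rw [← hencard]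
    have : (Set.range ψ).encard ≤ (Set.univ : Set T).encard := by
      rw [← Set.image_univ]
      exact Set.encard_image_le _ _
    exact_mod_cast ENat.toENNReal_le.mpr this
  · -- lower bound
    refine le_iInf₂ fun A hA => ?_
    have key : ∀ t : T, ∃ a ∈ A, aSharp α a (ψ t) ≤ r := by
      intro t
      have := hA (Set.mem_univ (ψ t))
      simpa using this
    choose g hgA hgd using key
    have hinj : Set.InjOn g Set.univ := by
      intro t _ t' _ hgt
      funext i
      have e1 : g t i = ψ t i := ((hiff (g t) (ψ t)).mp (hgd t)) i i.2
      have e2 : g t' i = ψ t' i := ((hiff (g t') (ψ t')).mp (hgd t')) i i.2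
      have h3 := e1.symm.trans (hgt ▸ e2)
      rw [hψ t i i.2, hψ t' i i.2] at h3
      exact h3
    have := Set.encard_le_encard_of_injOn (fun t _ => hgA t) hinj
    rw [← hencard]
    exact_mod_cast ENat.toENNReal_le.mpr this
end

section
/- With m = {mᵢ} (mᵢ ≥ 2) and α strictly decreasing to 0, the space S(m) with ultrametric α♯(x,y) = α(min{n : x(n) ≠ y(n)}) satisfies: the lower box dimension of (S(m), α♯) equals liminf_{n→∞} log(m₀⋯mₙ)/(−log α(n+1)), and the upper box dimension equals limsup_{n→∞} log(m₀⋯mₙ)/(−log α(n)). -/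
open Metric Set Filter
open scoped ENNReal

/-- `log N_d(X,r) / (− log r)`, valued in `[0,∞]`. -/
noncomputable def boxFn {X : Type} (d : X → X → ℝ) (r : ℝ) : ℝ≥0∞ :=
  if coverNum d Set.univ r = ⊤ then ⊤
  else ENNReal.ofReal (Real.log (coverNum d Set.univ r).toReal / (-Real.log r))

/-- The lower box dimension of `(X, d)`. -/
noncomputable def lowerBoxDim {X : Type} (d : X → X → ℝ) : ℝ≥0∞ :=
  Filter.liminf (boxFn d) (nhdsWithin 0 (Set.Ioo (0:ℝ) 1))

/-- The upper box dimension of `(X, d)`. -/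
noncomputable def upperBoxDim {X : Type} (d : X → X → ℝ) : ℝ≥0∞ :=
  Filter.limsup (boxFn d) (nhdsWithin 0 (Set.Ioo (0:ℝ) 1))

namespace Stmt8Aux

/-- The "level" of a radius `r`: the least `n` with `α n ≤ r`. -/
noncomputable def lev (α : ℕ → ℝ) (r : ℝ) : ℕ := sInf {n | α n ≤ r}

variable {m : ℕ → ℕ} {α : ℕ → ℝ}

lemma lev_nonempty (hlim : Tendsto α atTop (nhds 0)) {r : ℝ} (hr : 0 < r) :
    {n | α n ≤ r}.Nonempty := by
  obtain ⟨n, hn⟩ := (hlim.eventually (gt_mem_nhds hr)).exists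
  exact ⟨n, hn.le⟩

lemma alpha_lev_le (hlim : Tendsto α atTop (nhds 0)) {r : ℝ} (hr : 0 < r) :
    α (lev α r) ≤ r := Nat.sInf_mem (lev_nonempty hlim hr)

lemma lt_alpha_of_lt_lev {r : ℝ} {k : ℕ} (hk : k < lev α r) : r < α k := by
  have := Nat.notMem_of_lt_sInf hk
  simpa [not_le] using this

lemma le_lev (hlim : Tendsto α atTop (nhds 0)) {r : ℝ} (hr : 0 < r) {N : ℕ}
    (h : ∀ k < N, r < α k) : N ≤ lev α r := by
  by_contra h'
  push_neg at h'
  exact absurd (alpha_lev_le hlim hr) (not_le.2 (h _ h'))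

lemma lev_lt (hanti : StrictAnti α) (hlim : Tendsto α atTop (nhds 0)) {r : ℝ} {N : ℕ}
    (hr : 0 < r) (hrN : r < α N) : N < lev α r := by
  refine le_lev hlim hr fun k hk => lt_of_lt_of_le hrN (hanti.antitone ?_)
  omega

lemma lev_alpha (hanti : StrictAnti α) (n : ℕ) : lev α (α n) = n := by
  have hset : {k | α k ≤ α n} = {k | n ≤ k} := by
    ext k; exact hanti.le_iff_ge
  rw [lev, hset]
  refine le_antisymm (Nat.sInf_le (le_refl n)) (Nat.sInf_mem ⟨n, le_refl n⟩)

/-- Ball description: `aSharp α x y ≤ r` iff `x` and `y` agree below `lev α r`. -/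
lemma aSharp_le_iff (hanti : StrictAnti α) (hlim : Tendsto α atTop (nhds 0))
    {r : ℝ} (hr : 0 < r) (x y : SS m) :
    aSharp α x y ≤ r ↔ ∀ i < lev α r, x i = y i := by
  rcases eq_or_ne x y with rfl | hxy
  · simp [aSharp_self, hr.le]
  · rw [aSharp, if_neg hxy]
    have hD : {n | x n ≠ y n}.Nonempty := Function.ne_iff.mp hxy
    have hjD : x (sInf {n | x n ≠ y n}) ≠ y (sInf {n | x n ≠ y n}) := Nat.sInf_mem hD
    constructor
    · intro h i hi
      by_contra hne
      have h1 : sInf {n | x n ≠ y n} ≤ i := Nat.sInf_le hne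
      exact absurd h (not_le.2 (lt_alpha_of_lt_lev (lt_of_le_of_lt h1 hi)))
    · intro h
      have hjge : lev α r ≤ sInf {n | x n ≠ y n} := by
        by_contra h'
        push_neg at h'
        exact hjD (h _ h')
      exact le_trans (hanti.antitone hjge) (alpha_lev_le hlim hr)

lemma coverNum_eq (hm : ∀ i, 2 ≤ m i) (hanti : StrictAnti α)
    (hlim : Tendsto α atTop (nhds 0)) {r : ℝ} (hr : 0 < r) :
    coverNum (aSharp α : SS m → SS m → ℝ) Set.univ r
      = ((∏ i ∈ Finset.range (lev α r), m i : ℕ) : ℝ≥0∞) := by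
  set N := lev α r with hN
  have hcard : Fintype.card ((i : Fin N) → Fin (m i)) = ∏ i ∈ Finset.range N, m i := by
    rw [Fintype.card_pi]
    simp [Fin.prod_univ_eq_prod_range (fun i => m i) N]
  have hmpos : ∀ i, 0 < m i := fun i => lt_of_lt_of_le two_pos (hm i)
  -- extension map
  set e : ((i : Fin N) → Fin (m i)) → SS m :=
    fun w i => if h : i < N then w ⟨i, h⟩ else ⟨0, hmpos i⟩ with he
  have he_lt : ∀ w (i : ℕ) (h : i < N), e w i = w ⟨i, h⟩ := by
    intro w i h; simp [he, h]
  rw [coverNum]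
  refine le_antisymm ?_ ?_
  · -- upper bound: the balls centered at `range e` cover everything
    have hcover : (Set.univ : Set (SS m)) ⊆ ⋃ a ∈ Set.range e, {y | aSharp α a y ≤ r} := by
      intro y _
      refine Set.mem_iUnion₂.2 ⟨e (fun i => y i.1), ⟨fun i => y i.1, rfl⟩, ?_⟩
      rw [Set.mem_setOf_eq, aSharp_le_iff hanti hlim hr]
      intro i hi
      exact he_lt (fun i => y i.1) i hi
    refine le_trans (iInf_le_of_le (Set.range e) (iInf_le _ hcover)) ?_
    have h1 : (Set.range e).encard ≤ ((∏ i ∈ Finset.range N, m i : ℕ) : ℕ∞) := by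
      rw [← Set.image_univ]
      refine le_trans (Set.encard_image_le _ _) ?_
      rw [Set.encard_univ, ENat.card_eq_coe_fintype_card, hcard]
    have := ENat.toENNReal_le.2 h1
    rwa [ENat.toENNReal_coe] at this
  · -- lower bound
    refine le_iInf₂ fun A hA => ?_
    have hch : ∀ w : (i : Fin N) → Fin (m i), ∃ a ∈ A, aSharp α a (e w) ≤ r := by
      intro w
      have := hA (Set.mem_univ (e w))
      simpa using this
    choose f hfA hfle using hch
    have hinj : Function.Injective f := by
      intro w w' hww
      funext i
      have h1 := (aSharp_le_iff hanti hlim hr _ _).1 (hfle w) i.1 i.2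
      have h2 := (aSharp_le_iff hanti hlim hr _ _).1 (hfle w') i.1 i.2
      rw [he_lt w i.1 i.2] at h1
      rw [he_lt w' i.1 i.2] at h2
      rw [← Fin.eta i i.2, ← h1, ← h2, hww]
    have h1 : ((∏ i ∈ Finset.range N, m i : ℕ) : ℕ∞) ≤ A.encard := by
      rw [← hcard, ← ENat.card_eq_coe_fintype_card, ← Set.encard_univ]
      rw [← hinj.injOn.encard_image]
      refine Set.encard_le_encard ?_
      rintro a ⟨w, -, rfl⟩
      exact hfA w
    have := ENat.toENNReal_le.2 h1
    rwa [ENat.toENNReal_coe] at this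

noncomputable def L (m : ℕ → ℕ) (k : ℕ) : ℝ := Real.log (∏ i ∈ Finset.range k, (m i : ℝ))

lemma boxFn_eq (hm : ∀ i, 2 ≤ m i) (hanti : StrictAnti α)
    (hlim : Tendsto α atTop (nhds 0)) {r : ℝ} (hr : 0 < r) :
    boxFn (aSharp α : SS m → SS m → ℝ) r
      = ENNReal.ofReal (L m (lev α r) / (-Real.log r)) := by
  rw [L, boxFn, coverNum_eq hm hanti hlim hr, if_neg (ENNReal.natCast_ne_top _)]
  congr 2
  rw [ENNReal.toReal_natCast]
  push_cast
  ring


lemma one_le_prod (hm : ∀ i, 2 ≤ m i) (k : ℕ) :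
    (1 : ℝ) ≤ ∏ i ∈ Finset.range k, (m i : ℝ) := by
  have h : (1:ℕ) ≤ ∏ i ∈ Finset.range k, m i :=
    Finset.one_le_prod' fun i _ => by have := hm i; omega
  exact_mod_cast h

lemma L_nonneg (hm : ∀ i, 2 ≤ m i) (k : ℕ) : 0 ≤ L m k :=
  Real.log_nonneg (one_le_prod hm k)

lemma L_mono (hm : ∀ i, 2 ≤ m i) : Monotone (L m) := by
  intro k l hkl
  refine Real.log_le_log (lt_of_lt_of_le one_pos (one_le_prod hm k)) ?_
  have h : (∏ i ∈ Finset.range k, m i) ≤ ∏ i ∈ Finset.range l, m i :=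
    Finset.prod_le_prod_of_subset_of_one_le' (Finset.range_subset_range.2 hkl)
      fun i _ _ => by have := hm i; omega
  exact_mod_cast h

theorem lower_eq (hm : ∀ i, 2 ≤ m i) (hpos : ∀ n, 0 < α n) (hanti : StrictAnti α)
    (hlim : Tendsto α atTop (nhds 0)) :
    lowerBoxDim (aSharp α : SS m → SS m → ℝ)
      = Filter.liminf (fun n : ℕ =>
          ENNReal.ofReal (L m (n + 1) / (-Real.log (α (n + 1))))) atTop := by
  set l := nhdsWithin (0 : ℝ) (Set.Ioo 0 1) with hl
  rw [lowerBoxDim]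
  refine le_antisymm ?_ ?_
  · -- subsequence r = α (n+1)
    have hu : Tendsto (fun n : ℕ => α (n + 1)) atTop l := by
      rw [hl, tendsto_nhdsWithin_iff]
      refine ⟨hlim.comp (tendsto_add_atTop_nat 1), ?_⟩
      have h1 : ∀ᶠ n : ℕ in atTop, α (n + 1) < 1 :=
        (hlim.comp (tendsto_add_atTop_nat 1)).eventually (gt_mem_nhds one_pos)
      filter_upwards [h1] with n hn
      exact ⟨hpos _, hn⟩
    have heq : (boxFn (aSharp α : SS m → SS m → ℝ) ∘ fun n : ℕ => α (n + 1))
        = fun n : ℕ => ENNReal.ofReal (L m (n + 1) / (-Real.log (α (n + 1)))) := by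
      funext n
      show boxFn (aSharp α : SS m → SS m → ℝ) (α (n + 1)) = _
      rw [boxFn_eq hm hanti hlim (hpos (n + 1)), lev_alpha hanti]
    have h2 : Filter.liminf (boxFn (aSharp α : SS m → SS m → ℝ)) l
        ≤ Filter.liminf (boxFn (aSharp α : SS m → SS m → ℝ))
            (map (fun n : ℕ => α (n + 1)) atTop) :=
      liminf_le_liminf_of_le hu
    have h3 : Filter.liminf (boxFn (aSharp α : SS m → SS m → ℝ))
          (map (fun n : ℕ => α (n + 1)) atTop)
        = Filter.liminf (boxFn (aSharp α : SS m → SS m → ℝ) ∘ fun n : ℕ => α (n + 1))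
            atTop := rfl
    rw [h3, heq] at h2
    exact h2
  · rw [liminf_eq_iSup_iInf_of_nat]
    refine iSup_le fun N => ?_
    refine Filter.le_liminf_of_le (by isBoundedDefault) ?_
    have hev1 : ∀ᶠ r' in l, r' ∈ Set.Ioo (0:ℝ) 1 := eventually_mem_nhdsWithin
    have hev2 : ∀ᶠ r' in l, r' < α N := (gt_mem_nhds (hpos N)).filter_mono nhdsWithin_le_nhds
    filter_upwards [hev1, hev2] with r hr hrN
    have hr0 : (0:ℝ) < r := hr.1
    have hK : N < lev α r := lev_lt hanti hlim hr0 hrN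
    have hlogr : 0 < -Real.log r := by
      have := Real.log_neg hr0 hr.2; linarith
    have hαr : α (lev α r) ≤ r := alpha_lev_le hlim hr0
    have hlogα : -Real.log r ≤ -Real.log (α (lev α r)) := by
      have := Real.log_le_log (hpos _) hαr; linarith
    refine le_trans (iInf₂_le (lev α r - 1) (by omega)) ?_
    have h1 : lev α r - 1 + 1 = lev α r := by omega
    rw [boxFn_eq hm hanti hlim hr0, h1]
    apply ENNReal.ofReal_le_ofReal
    have hLn : 0 ≤ L m (lev α r) := L_nonneg hm _
    show L m (lev α r) / (-Real.log (α (lev α r))) ≤ L m (lev α r) / (-Real.log r)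
    gcongr

theorem upper_eq (hm : ∀ i, 2 ≤ m i) (hpos : ∀ n, 0 < α n) (hanti : StrictAnti α)
    (hlim : Tendsto α atTop (nhds 0)) :
    upperBoxDim (aSharp α : SS m → SS m → ℝ)
      = Filter.limsup (fun n : ℕ =>
          ENNReal.ofReal (L m (n + 1) / (-Real.log (α n)))) atTop := by
  set l := nhdsWithin (0 : ℝ) (Set.Ioo 0 1) with hl
  set g := fun n : ℕ => ENNReal.ofReal (L m (n + 1) / (-Real.log (α n))) with hg
  obtain ⟨N₁, hN₁⟩ := (hlim.eventually (gt_mem_nhds one_pos)).exists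
  rw [upperBoxDim]
  refine le_antisymm ?_ ?_
  · rw [limsup_eq_iInf_iSup_of_nat]
    refine le_iInf fun N => ?_
    have key : Filter.limsup (boxFn (aSharp α : SS m → SS m → ℝ)) l
        ≤ ⨆ n, ⨆ (_ : n ≥ max N N₁), g n := by
      refine Filter.limsup_le_of_le (by isBoundedDefault) ?_
      have hev1 : ∀ᶠ r' in l, r' ∈ Set.Ioo (0:ℝ) 1 := eventually_mem_nhdsWithin
      have hev2 : ∀ᶠ r' in l, r' < α (max N N₁) :=
        (gt_mem_nhds (hpos _)).filter_mono nhdsWithin_le_nhds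
      filter_upwards [hev1, hev2] with r hr hrM
      have hr0 : (0:ℝ) < r := hr.1
      have hK : max N N₁ < lev α r := lev_lt hanti hlim hr0 hrM
      have hrK : r < α (lev α r - 1) := lt_alpha_of_lt_lev (by omega)
      have hαK1 : α (lev α r - 1) < 1 :=
        lt_of_le_of_lt (hanti.antitone (show N₁ ≤ lev α r - 1 by omega)) hN₁
      have h2 : 0 < -Real.log (α (lev α r - 1)) := by
        have := Real.log_neg (hpos _) hαK1; linarith
      have h3 : -Real.log (α (lev α r - 1)) ≤ -Real.log r := by
        have := Real.log_le_log hr0 hrK.le; linarith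
      refine le_trans ?_ (le_iSup₂ (f := fun n (_ : n ≥ max N N₁) => g n)
        (lev α r - 1) (show lev α r - 1 ≥ max N N₁ by omega))
      rw [boxFn_eq hm hanti hlim hr0, hg]
      show _ ≤ ENNReal.ofReal (L m (lev α r - 1 + 1) / -Real.log (α (lev α r - 1)))
      have h1 : lev α r - 1 + 1 = lev α r := by omega
      rw [h1]
      apply ENNReal.ofReal_le_ofReal
      have hLn : 0 ≤ L m (lev α r) := L_nonneg hm _
      gcongr
    refine le_trans key ?_
    refine iSup₂_le fun n hn => le_iSup₂ (f := fun i (_ : i ≥ N) => g i) n ?_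
    exact le_trans (le_max_left _ _) hn
  · refine ENNReal.le_of_forall_lt_one_mul_le fun a ha => ?_
    have haT : a ≠ ⊤ := (ha.trans_le le_top).ne
    rcases eq_or_ne a 0 with rfl | ha0
    · simp
    set θ := a.toReal with hθdef
    have hθpos : 0 < θ := ENNReal.toReal_pos ha0 haT
    have hθlt1 : θ < 1 := by
      have h := (ENNReal.toReal_lt_toReal haT (by norm_num : (1:ℝ≥0∞) ≠ ⊤)).2 ha
      simpa using h
    have haθ : a = ENNReal.ofReal θ := (ENNReal.ofReal_toReal haT).symm
    set u := fun n : ℕ => Real.exp (Real.log (α n) / θ) with hu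
    have hα : Tendsto α atTop (nhdsWithin 0 (Set.Ioi 0)) := by
      rw [tendsto_nhdsWithin_iff]
      exact ⟨hlim, Eventually.of_forall fun n => hpos n⟩
    have hlog : Tendsto (fun n => Real.log (α n)) atTop atBot :=
      Real.tendsto_log_nhdsGT_zero.comp hα
    have hu0 : Tendsto u atTop (nhds 0) :=
      Real.tendsto_exp_atBot.comp (hlog.atBot_div_const hθpos)
    have hα1 : ∀ᶠ n : ℕ in atTop, α n < 1 := hlim.eventually (gt_mem_nhds one_pos)
    have humem : ∀ᶠ n : ℕ in atTop, u n ∈ Set.Ioo (0:ℝ) 1 := by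
      filter_upwards [hα1] with n hn
      refine ⟨Real.exp_pos _, Real.exp_lt_one_iff.2 ?_⟩
      exact div_neg_of_neg_of_pos (Real.log_neg (hpos n) hn) hθpos
    have hul : Tendsto u atTop l := by
      rw [hl, tendsto_nhdsWithin_iff]; exact ⟨hu0, humem⟩
    have hpt : ∀ᶠ n : ℕ in atTop, a * g n
        ≤ (boxFn (aSharp α : SS m → SS m → ℝ) ∘ u) n := by
      filter_upwards [hα1] with n hn
      have hc : Real.log (α n) < 0 := Real.log_neg (hpos n) hn
      have hr0 : 0 < u n := Real.exp_pos _
      have hlt : u n < α n := by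
        show Real.exp (Real.log (α n) / θ) < α n
        nth_rewrite 2 [show α n = Real.exp (Real.log (α n)) from (Real.exp_log (hpos n)).symm]
        apply Real.exp_lt_exp.2
        rw [div_lt_iff₀ hθpos]
        nlinarith
      have hK : n < lev α (u n) := lev_lt hanti hlim hr0 hlt
      have hln : 0 < -Real.log (α n) := by linarith
      show a * g n ≤ boxFn (aSharp α : SS m → SS m → ℝ) (u n)
      rw [boxFn_eq hm hanti hlim hr0, hg, haθ, ← ENNReal.ofReal_mul hθpos.le]
      apply ENNReal.ofReal_le_ofReal
      have hlogu : Real.log (u n) = Real.log (α n) / θ := Real.log_exp _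
      rw [hlogu]
      rw [show -(Real.log (α n) / θ) = (-Real.log (α n)) / θ by ring, div_div_eq_mul_div]
      rw [show θ * (L m (n + 1) / (-Real.log (α n)))
          = L m (n + 1) * θ / (-Real.log (α n)) by ring]
      have hLle : L m (n + 1) ≤ L m (lev α (u n)) := L_mono hm (by omega)
      gcongr
    have h1 : a * Filter.limsup g atTop ≤ Filter.limsup (fun n => a * g n) atTop := by
      rw [limsup_eq_iInf_iSup_of_nat, limsup_eq_iInf_iSup_of_nat]
      refine le_iInf fun N => ?_
      refine le_trans (mul_le_mul_right (iInf_le _ N) a) ?_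
      rw [ENNReal.mul_iSup]
      refine iSup_mono fun n => ?_
      exact le_of_eq (ENNReal.mul_iSup _ _)
    have h2 : Filter.limsup (fun n => a * g n) atTop
        ≤ Filter.limsup (boxFn (aSharp α : SS m → SS m → ℝ) ∘ u) atTop :=
      limsup_le_limsup hpt
    have h3 : Filter.limsup (boxFn (aSharp α : SS m → SS m → ℝ) ∘ u) atTop
        ≤ Filter.limsup (boxFn (aSharp α : SS m → SS m → ℝ)) l :=
      limsup_le_limsup_of_le hul
    exact le_trans h1 (le_trans h2 h3)

end Stmt8Aux

/-- The lower box dimension of `(S(m), α♯)` equals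
`liminf_n log(m₀⋯mₙ)/(−log α(n+1))`, and the upper box dimension equals
`limsup_n log(m₀⋯mₙ)/(−log α(n))`. -/
theorem stmt8 (m : ℕ → ℕ) (α : ℕ → ℝ) (hm : ∀ i, 2 ≤ m i) (hpos : ∀ n, 0 < α n)
    (hanti : StrictAnti α) (hlim : Tendsto α atTop (nhds 0)) :
    lowerBoxDim (aSharp α : SS m → SS m → ℝ) =
      Filter.liminf (fun n : ℕ => ENNReal.ofReal
        (Real.log (∏ i ∈ Finset.range (n + 1), (m i : ℝ)) / (-Real.log (α (n + 1))))) atTop ∧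
    upperBoxDim (aSharp α : SS m → SS m → ℝ) =
      Filter.limsup (fun n : ℕ => ENNReal.ofReal
        (Real.log (∏ i ∈ Finset.range (n + 1), (m i : ℝ)) / (-Real.log (α n)))) atTop := by
  exact ⟨Stmt8Aux.lower_eq hm hpos hanti hlim, Stmt8Aux.upper_eq hm hpos hanti hlim⟩
end

section
/- With m = {mᵢ} (mᵢ ≥ 2) and α strictly decreasing to 0, the Hausdorff dimension of (S(m), α♯) equals liminf_{n→∞} log(m₀⋯mₙ)/(−log α(n+1)). -/
open Metric Set Filter
open scoped ENNReal

/-- The ultrametric space `(S(m), α♯)` as a metric space. -/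
noncomputable def ssMetric {m : ℕ → ℕ} (α : ℕ → ℝ) (hpos : ∀ n, 0 < α n)
    (hanti : Antitone α) : MetricSpace (SS m) where
  dist := aSharp α
  dist_self := aSharp_self α
  dist_comm := aSharp_comm α
  dist_triangle x y z := by
    show aSharp α x z ≤ aSharp α x y + aSharp α y z
    refine (aSharp_strong α hpos hanti x y z).trans ?_
    exact max_le (le_add_of_nonneg_right (aSharp_nonneg α hpos y z))
      (le_add_of_nonneg_left (aSharp_nonneg α hpos x y))
  eq_of_dist_eq_zero {x y} h := by
    by_contra hne
    exact absurd h (ne_of_gt (aSharp_pos α hpos x y hne))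

namespace Stmt12Aux

open MeasureTheory

/-- cylinder of length `n` around `x` -/
def cyl {m : ℕ → ℕ} (n : ℕ) (x : SS m) : Set (SS m) := {y | ∀ i, i < n → y i = x i}

/-- product of the first `n` branching numbers -/
def Mp (m : ℕ → ℕ) (n : ℕ) : ℕ := ∏ i ∈ Finset.range n, m i

lemma Mp_pos {m : ℕ → ℕ} (hm : ∀ i, 2 ≤ m i) (n : ℕ) : 0 < Mp m n :=
  Finset.prod_pos fun i _ => lt_of_lt_of_le two_pos (hm i)

lemma two_pow_le_Mp {m : ℕ → ℕ} (hm : ∀ i, 2 ≤ m i) (n : ℕ) : 2 ^ n ≤ Mp m n := by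
  calc 2 ^ n = ∏ _i ∈ Finset.range n, 2 := by simp
    _ ≤ Mp m n := Finset.prod_le_prod' fun i _ => hm i

lemma mem_cyl_self {m : ℕ → ℕ} (n : ℕ) (x : SS m) : x ∈ cyl n x := fun _ _ => rfl

lemma agree_below {m : ℕ → ℕ} {x y : SS m} {i : ℕ}
    (hi : i < sInf {n | x n ≠ y n}) : x i = y i := by
  have := Nat.notMem_of_lt_sInf hi
  simpa using this

lemma mem_cyl_iff {m : ℕ → ℕ} {α : ℕ → ℝ} (hpos : ∀ n, 0 < α n) (hanti : StrictAnti α)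
    {x y : SS m} {n : ℕ} : y ∈ cyl n x ↔ aSharp α x y ≤ α n := by
  by_cases hxy : x = y
  · subst hxy
    simp [mem_cyl_self, aSharp_self, (hpos n).le]
  · have hne : {k | x k ≠ y k}.Nonempty := Function.ne_iff.mp hxy
    rw [aSharp, if_neg hxy, hanti.le_iff_ge]
    constructor
    · intro h
      by_contra hlt
      push_neg at hlt
      have hk := Nat.sInf_mem hne
      exact hk ((h _ hlt).symm)
    · intro h i hi
      exact (agree_below (lt_of_lt_of_le hi h)).symm

lemma mem_cyl_iff_lt {m : ℕ → ℕ} {α : ℕ → ℝ} (hpos : ∀ n, 0 < α n) (hanti : StrictAnti α)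
    {x y : SS m} {n : ℕ} : y ∈ cyl (n + 1) x ↔ aSharp α x y < α n := by
  by_cases hxy : x = y
  · subst hxy
    simp [mem_cyl_self, aSharp_self, hpos n]
  · have hne : {k | x k ≠ y k}.Nonempty := Function.ne_iff.mp hxy
    rw [aSharp, if_neg hxy, hanti.lt_iff_gt]
    constructor
    · intro h
      by_contra hlt
      push_neg at hlt
      have hk := Nat.sInf_mem hne
      exact hk ((h _ (by omega)).symm)
    · intro h i hi
      exact (agree_below (lt_of_lt_of_le (by omega) h)).symm

end Stmt12Aux
namespace Stmt12Aux

open MeasureTheory Metric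

variable {m : ℕ → ℕ} {α : ℕ → ℝ}

lemma cyl_eq_ball (hpos : ∀ n, 0 < α n) (hanti : StrictAnti α) (x : SS m) (n : ℕ) :
    letI := ssMetric (m := m) α hpos hanti.antitone
    Metric.ball x (α n) = cyl (n + 1) x := by
  letI := ssMetric (m := m) α hpos hanti.antitone
  ext y
  rw [Metric.mem_ball]
  have hd : dist y x = aSharp α x y := by
    show aSharp α y x = aSharp α x y
    exact aSharp_comm α y x
  rw [hd, ← mem_cyl_iff_lt hpos hanti]

lemma cyl_isOpen (hpos : ∀ n, 0 < α n) (hanti : StrictAnti α) (x : SS m) {n : ℕ}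
    (hn : 1 ≤ n) :
    letI := ssMetric (m := m) α hpos hanti.antitone
    IsOpen (cyl n x) := by
  letI := ssMetric (m := m) α hpos hanti.antitone
  obtain ⟨k, rfl⟩ : ∃ k, n = k + 1 := ⟨n - 1, by omega⟩
  rw [← cyl_eq_ball hpos hanti]
  exact Metric.isOpen_ball

lemma cyl_ediam_le (hpos : ∀ n, 0 < α n) (hanti : StrictAnti α) (x : SS m) (n : ℕ) :
    letI := ssMetric (m := m) α hpos hanti.antitone
    EMetric.diam (cyl n x) ≤ ENNReal.ofReal (α n) := by
  letI := ssMetric (m := m) α hpos hanti.antitone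
  apply EMetric.diam_le
  intro y hy z hz
  rw [edist_dist]
  apply ENNReal.ofReal_le_ofReal
  have h1 : aSharp α x y ≤ α n := (mem_cyl_iff hpos hanti).mp hy
  have h2 : aSharp α x z ≤ α n := (mem_cyl_iff hpos hanti).mp hz
  have h3 : dist y z = aSharp α y z := rfl
  rw [h3]
  refine le_trans (aSharp_strong α hpos hanti.antitone y x z) ?_
  rw [aSharp_comm α y x]
  exact max_le h1 h2

/-- basepoint -/
def x0 (hm : ∀ i, 2 ≤ m i) : SS m := fun i => ⟨0, lt_of_lt_of_le two_pos (hm i)⟩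

/-- extension of a finite word to a point of `SS m` -/
def ext_ (hm : ∀ i, 2 ≤ m i) (n : ℕ) (w : ∀ i : Fin n, Fin (m i)) : SS m :=
  fun i => if h : i < n then w ⟨i, h⟩ else x0 hm i

lemma cyl_cover (hm : ∀ i, 2 ≤ m i) (n : ℕ) :
    (Set.univ : Set (SS m)) ⊆ ⋃ w : ∀ i : Fin n, Fin (m i), cyl n (ext_ hm n w) := by
  intro x _
  refine Set.mem_iUnion.2 ⟨fun i => x i, fun i hi => ?_⟩
  simp only [ext_, dif_pos hi]

end Stmt12Aux
namespace Stmt12Aux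

open MeasureTheory
open scoped ENNReal

variable {m : ℕ → ℕ}

lemma kraft (hm : ∀ i, 2 ≤ m i) (J : Finset ℕ) (len : ℕ → ℕ) (pt : ℕ → SS m)
    (hcov : (Set.univ : Set (SS m)) ⊆ ⋃ j ∈ J, cyl (len j) (pt j)) :
    1 ≤ ∑ j ∈ J, ((Mp m (len j) : ℝ≥0∞))⁻¹ := by
  classical
  set N := J.sup len with hN
  have hlen : ∀ j ∈ J, len j ≤ N := fun j hj => Finset.le_sup hj
  set W := ∀ i : Fin N, Fin (m i) with hW
  set P : ℕ → W → Prop := fun j w => ∀ i : Fin N, (i : ℕ) < len j → ((w i : ℕ) = (pt j i : ℕ))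
    with hP
  -- every word satisfies P j for some j ∈ J
  have hWcov : ∀ w : W, ∃ j ∈ J, P j w := by
    intro w
    have hx := hcov (Set.mem_univ (ext_ hm N w))
    simp only [Set.mem_iUnion] at hx
    obtain ⟨j, hj, hmem⟩ := hx
    refine ⟨j, hj, fun i hi => ?_⟩
    have h2 := hmem (i : ℕ) hi
    simp only [ext_, dif_pos i.isLt, Fin.eta] at h2
    exact congrArg Fin.val h2
  have hcard : Fintype.card W ≤ ∑ j ∈ J, (Finset.univ.filter (P j)).card := by
    have hsub : (Finset.univ : Finset W) ⊆ J.biUnion fun j => Finset.univ.filter (P j) := by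
      intro w _
      obtain ⟨j, hj, hPj⟩ := hWcov w
      exact Finset.mem_biUnion.2 ⟨j, hj, Finset.mem_filter.2 ⟨Finset.mem_univ _, hPj⟩⟩
    calc Fintype.card W = (Finset.univ : Finset W).card := rfl
      _ ≤ _ := le_trans (Finset.card_le_card hsub) Finset.card_biUnion_le
  set Q : ℕ → ℕ := fun j => ∏ i ∈ Finset.Ico (len j) N, m i with hQ
  have hQcard : ∀ j ∈ J, (Finset.univ.filter (P j)).card ≤ Q j := by
    intro j hj
    have hjN := hlen j hj
    have hQeq : Q j = Fintype.card (∀ k : Fin (N - len j), Fin (m (len j + (k : ℕ)))) := by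
      rw [Fintype.card_pi]
      simp only [Fintype.card_fin]
      rw [Fin.prod_univ_eq_prod_range (fun k => m (len j + k)) (N - len j)]
      show (∏ i ∈ Finset.Ico (len j) N, m i) = _
      rw [Finset.prod_Ico_eq_prod_range]
    rw [hQeq]
    rw [← Finset.card_univ (α := ∀ k : Fin (N - len j), Fin (m (len j + (k : ℕ))))]
    apply Finset.card_le_card_of_injOn
      (fun (w : W) (k : Fin (N - len j)) => w ⟨len j + (k : ℕ), by have hk := k.isLt; omega⟩)
    · intro w _; exact Finset.mem_univ _
    · intro w hw w' hw' heq
      have hPw : P j w := (Finset.mem_filter.mp hw).2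
      have hPw' : P j w' := (Finset.mem_filter.mp hw').2
      funext i
      by_cases hi : (i : ℕ) < len j
      · have := (hPw i hi).trans (hPw' i hi).symm
        exact Fin.val_injective this
      · push_neg at hi
        have hk : (i : ℕ) - len j < N - len j := by omega
        have hthis := congrFun heq ⟨(i : ℕ) - len j, hk⟩
        simp only at hthis
        have hb : len j + ((i : ℕ) - len j) < N := by have := i.isLt; omega
        have hidx : (⟨len j + ((i : ℕ) - len j), hb⟩ : Fin N) = i := by
          apply Fin.ext; simp; omega
        have hv : ((w ⟨len j + ((i : ℕ) - len j), hb⟩ : ℕ))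
            = ((w' ⟨len j + ((i : ℕ) - len j), hb⟩ : ℕ)) := congrArg Fin.val hthis
        have h1 : ∀ u : W, (u i : ℕ) = (u ⟨len j + ((i : ℕ) - len j), hb⟩ : ℕ) :=
          fun u => congrArg (fun t : Fin N => (u t : ℕ)) hidx.symm
        exact Fin.val_injective ((h1 w).trans (hv.trans (h1 w').symm))
  have hWcard : Fintype.card W = Mp m N := by
    show Fintype.card (∀ i : Fin N, Fin (m i)) = Mp m N
    rw [Fintype.card_pi]
    simp only [Fintype.card_fin]
    rw [Fin.prod_univ_eq_prod_range (fun i => m i) N]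
    rfl
  have hnat : Mp m N ≤ ∑ j ∈ J, Q j :=
    hWcard ▸ le_trans hcard (Finset.sum_le_sum hQcard)
  -- pass to ℝ≥0∞
  have hMN0 : ((Mp m N : ℝ≥0∞)) ≠ 0 := by
    exact_mod_cast (Mp_pos hm N).ne'
  have hMNt : ((Mp m N : ℝ≥0∞)) ≠ ⊤ := ENNReal.natCast_ne_top _
  have hterm : ∀ j ∈ J, (Q j : ℝ≥0∞) * (Mp m N : ℝ≥0∞)⁻¹ = ((Mp m (len j) : ℝ≥0∞))⁻¹ := by
    intro j hj
    have hsplit : (Mp m N : ℝ≥0∞) = (Mp m (len j) : ℝ≥0∞) * (Q j : ℝ≥0∞) := by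
      rw [← Nat.cast_mul]
      congr 1
      rw [hQ]
      exact (Finset.prod_range_mul_prod_Ico m (hlen j hj)).symm
    have hQ0 : (Q j : ℝ≥0∞) ≠ 0 := by
      have : 0 < Q j := Finset.prod_pos fun i _ => lt_of_lt_of_le two_pos (hm i)
      exact_mod_cast this.ne'
    have hQt : (Q j : ℝ≥0∞) ≠ ⊤ := ENNReal.natCast_ne_top _
    have hL0 : ((Mp m (len j) : ℝ≥0∞)) ≠ 0 := by
      exact_mod_cast (Mp_pos hm (len j)).ne'
    rw [hsplit, ENNReal.mul_inv (Or.inl hL0) (Or.inr hQ0)]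
    rw [← mul_assoc, mul_comm (Q j : ℝ≥0∞) _, mul_assoc,
      ENNReal.mul_inv_cancel hQ0 hQt, mul_one]
  calc (1 : ℝ≥0∞) = (Mp m N : ℝ≥0∞) * (Mp m N : ℝ≥0∞)⁻¹ :=
        (ENNReal.mul_inv_cancel hMN0 hMNt).symm
    _ ≤ (∑ j ∈ J, (Q j : ℝ≥0∞)) * (Mp m N : ℝ≥0∞)⁻¹ := by
        gcongr
        exact_mod_cast hnat
    _ = ∑ j ∈ J, (Q j : ℝ≥0∞) * (Mp m N : ℝ≥0∞)⁻¹ := Finset.sum_mul _ _ _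
    _ = ∑ j ∈ J, ((Mp m (len j) : ℝ≥0∞))⁻¹ := Finset.sum_congr rfl hterm

end Stmt12Aux
namespace Stmt12Aux

open Metric Filter

variable {m : ℕ → ℕ} {α : ℕ → ℝ}

lemma isCompact_univ_ss (hm : ∀ i, 2 ≤ m i) (hpos : ∀ n, 0 < α n) (hanti : StrictAnti α)
    (hlim : Tendsto α atTop (nhds 0)) :
    letI := ssMetric (m := m) α hpos hanti.antitone
    IsCompact (Set.univ : Set (SS m)) := by
  letI := ssMetric (m := m) α hpos hanti.antitone
  let F : ((i : ℕ) → Fin (m i)) → SS m := fun x => x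
  have hcont : Continuous F := by
    rw [continuous_def]
    intro s hs
    rw [Metric.isOpen_iff] at hs
    rw [isOpen_iff_mem_nhds]
    intro x hx
    obtain ⟨ε, hε, hball⟩ := hs (F x) hx
    obtain ⟨n, hn⟩ : ∃ n, α n < ε := (hlim.eventually (gt_mem_nhds hε)).exists
    have hopen : IsOpen {y : (i : ℕ) → Fin (m i) | ∀ i, i < n → y i = x i} := by
      have heq : {y : (i : ℕ) → Fin (m i) | ∀ i, i < n → y i = x i}
          = ⋂ i ∈ Finset.range n, (fun y : (i : ℕ) → Fin (m i) => y i) ⁻¹' {x i} := by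
        ext y
        simp [Set.mem_iInter, Finset.mem_range]
      rw [heq]
      exact isOpen_biInter_finset fun i _ =>
        (continuous_apply i).isOpen_preimage _ (isOpen_discrete _)
    refine Filter.mem_of_superset (hopen.mem_nhds fun i hi => rfl) ?_
    intro y hy
    apply hball
    show dist (F y) (F x) < ε
    have hmem : (F y) ∈ cyl n (F x) := hy
    have := (mem_cyl_iff hpos hanti).mp hmem
    have hd : dist (F y) (F x) = aSharp α (F x) (F y) := aSharp_comm α (F y) (F x)
    rw [hd]
    exact lt_of_le_of_lt this hn
  have hF : F '' Set.univ = Set.univ := by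
    rw [Set.image_univ]
    exact Set.range_eq_univ.mpr fun y => ⟨y, rfl⟩
  have := (isCompact_univ (X := (i : ℕ) → Fin (m i))).image hcont
  rwa [hF] at this

end Stmt12Aux
namespace Stmt12Aux

variable {m : ℕ → ℕ} {α : ℕ → ℝ}

lemma upper_numeric (hm : ∀ i, 2 ≤ m i) (hpos : ∀ n, 0 < α n) {n : ℕ} {s : ℝ}
    (hα1 : α (n + 1) < 1)
    (h : Real.log (Mp m (n + 1)) / (-Real.log (α (n + 1))) < s) :
    (Mp m (n + 1) : ℝ) * α (n + 1) ^ s < 1 := by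
  have ha : 0 < α (n + 1) := hpos _
  have hloga : Real.log (α (n + 1)) < 0 := Real.log_neg ha hα1
  have hd : 0 < -Real.log (α (n + 1)) := by linarith
  have hM : (0 : ℝ) < Mp m (n + 1) := by exact_mod_cast Mp_pos hm _
  have hrp : 0 < α (n + 1) ^ s := Real.rpow_pos_of_pos ha s
  have hprod : 0 < (Mp m (n + 1) : ℝ) * α (n + 1) ^ s := mul_pos hM hrp
  rw [div_lt_iff₀ hd] at h
  rw [← Real.exp_log hprod]
  have hlogprod : Real.log ((Mp m (n + 1) : ℝ) * α (n + 1) ^ s)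
      = Real.log (Mp m (n + 1)) + s * Real.log (α (n + 1)) := by
    rw [Real.log_mul hM.ne' hrp.ne', Real.log_rpow ha]
  rw [hlogprod]
  have h2 : Real.log (Mp m (n + 1)) + s * Real.log (α (n + 1)) < 0 := by nlinarith
  calc Real.exp _ < Real.exp 0 := Real.exp_lt_exp.mpr h2
    _ = 1 := Real.exp_zero

lemma lower_numeric (hm : ∀ i, 2 ≤ m i) (hpos : ∀ n, 0 < α n) {n : ℕ} {s : ℝ}
    (hα1 : α (n + 1) < 1)
    (h : s < Real.log (Mp m (n + 1)) / (-Real.log (α (n + 1)))) :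
    ((Mp m (n + 1) : ℝ))⁻¹ < α (n + 1) ^ s := by
  have ha : 0 < α (n + 1) := hpos _
  have hloga : Real.log (α (n + 1)) < 0 := Real.log_neg ha hα1
  have hd : 0 < -Real.log (α (n + 1)) := by linarith
  have hM : (0 : ℝ) < Mp m (n + 1) := by exact_mod_cast Mp_pos hm _
  have hrp : 0 < α (n + 1) ^ s := Real.rpow_pos_of_pos ha s
  have hprod : 0 < (Mp m (n + 1) : ℝ) * α (n + 1) ^ s := mul_pos hM hrp
  rw [lt_div_iff₀ hd] at h
  have h1 : 1 < (Mp m (n + 1) : ℝ) * α (n + 1) ^ s := by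
    have hlogprod : Real.log ((Mp m (n + 1) : ℝ) * α (n + 1) ^ s)
        = Real.log (Mp m (n + 1)) + s * Real.log (α (n + 1)) := by
      rw [Real.log_mul hM.ne' hrp.ne', Real.log_rpow ha]
    have h2 : 0 < Real.log ((Mp m (n + 1) : ℝ) * α (n + 1) ^ s) := by
      rw [hlogprod]; nlinarith
    calc (1 : ℝ) = Real.exp 0 := Real.exp_zero.symm
      _ < Real.exp (Real.log ((Mp m (n + 1) : ℝ) * α (n + 1) ^ s)) := Real.exp_lt_exp.mpr h2
      _ = _ := Real.exp_log hprod
  rw [inv_lt_iff_one_lt_mul₀ hM]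
  linarith [mul_comm (Mp m (n + 1) : ℝ) (α (n + 1) ^ s)]

end Stmt12Aux
open Stmt12Aux MeasureTheory MeasureTheory.Measure in
/-- The Hausdorff dimension of `(S(m), α♯)` equals
`liminf_n log(m₀⋯mₙ)/(−log α(n+1))`. -/
theorem stmt12 (m : ℕ → ℕ) (α : ℕ → ℝ) (hm : ∀ i, 2 ≤ m i) (hpos : ∀ n, 0 < α n)
    (hanti : StrictAnti α) (hlim : Tendsto α atTop (nhds 0)) :
    @dimH (SS m) (@MetricSpace.toEMetricSpace (SS m) (ssMetric α hpos hanti.antitone))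
        Set.univ =
      Filter.liminf (fun n : ℕ => ENNReal.ofReal
        (Real.log (∏ i ∈ Finset.range (n + 1), (m i : ℝ)) / (-Real.log (α (n + 1))))) atTop := by
  classical
  letI : MetricSpace (SS m) := ssMetric α hpos hanti.antitone
  borelize (SS m)
  have hshift : Tendsto (fun n => α (n + 1)) atTop (nhds 0) :=
    hlim.comp (tendsto_add_atTop_nat 1)
  have hev1 : ∀ᶠ n in atTop, α (n + 1) < 1 :=
    hshift.eventually (gt_mem_nhds one_pos)
  have hfe : (fun n : ℕ => ENNReal.ofReal
        (Real.log (∏ i ∈ Finset.range (n + 1), (m i : ℝ)) / (-Real.log (α (n + 1)))))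
      = fun n : ℕ => ENNReal.ofReal (Real.log (Mp m (n + 1)) / (-Real.log (α (n + 1)))) := by
    funext n
    congr 2
    rw [Mp]
    push_cast
    ring
  rw [hfe]
  set f := fun n : ℕ => ENNReal.ofReal (Real.log (Mp m (n + 1)) / (-Real.log (α (n + 1))))
    with hf
  set D := Filter.liminf f atTop with hD
  have hcard : ∀ n : ℕ, Fintype.card (∀ i : Fin n, Fin (m i)) = Mp m n := by
    intro n
    rw [Fintype.card_pi]
    simp only [Fintype.card_fin]
    rw [Fin.prod_univ_eq_prod_range (fun i => m i) n]
    rfl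
  refine le_antisymm ?_ ?_
  · -- upper bound
    apply ENNReal.le_of_forall_nnreal_lt
    intro r hr
    by_contra hcon
    have hDr : D < ↑r := lt_of_not_ge hcon
    have hdim : dimH (Set.univ : Set (SS m)) ≤ ↑r := by
      apply dimH_le_of_hausdorffMeasure_ne_top
      have hfreq : ∃ᶠ n in atTop, f n < ↑r ∧ α (n + 1) < 1 :=
        (frequently_lt_of_liminf_lt (h := hDr)).and_eventually hev1
      set l := atTop ⊓ 𝓟 {n | f n < ↑r ∧ α (n + 1) < 1} with hl
      have hne : l.NeBot := frequently_iff_neBot.mp hfreq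
      have hμ : μH[(r : ℝ)] (Set.univ : Set (SS m)) ≤ 1 := by
        have htd : Tendsto (fun n => ENNReal.ofReal (α (n + 1))) l (nhds 0) := by
          have h1 : Tendsto (fun n => ENNReal.ofReal (α (n + 1))) atTop
              (nhds (ENNReal.ofReal 0)) := (ENNReal.continuous_ofReal.tendsto 0).comp hshift
          rw [ENNReal.ofReal_zero] at h1
          exact h1.mono_left inf_le_left
        refine le_trans (hausdorffMeasure_le_liminf_sum (r : ℝ) Set.univ
          (fun n => ENNReal.ofReal (α (n + 1))) htd
          (fun n w => cyl (n + 1) (ext_ hm (n + 1) w)) ?_ ?_) ?_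
        · exact Filter.Eventually.of_forall fun n w => cyl_ediam_le hpos hanti _ _
        · exact Filter.Eventually.of_forall fun n => cyl_cover hm (n + 1)
        · refine liminf_le_of_frequently_le ?_ (by isBoundedDefault)
          apply Filter.Eventually.frequently
          have hgood : ∀ᶠ n in l, f n < ↑r ∧ α (n + 1) < 1 :=
            Filter.eventually_inf_principal.mpr (Filter.Eventually.of_forall fun n hn => hn)
          filter_upwards [hgood] with n hn
          have hq : Real.log (Mp m (n + 1)) / (-Real.log (α (n + 1))) < (r : ℝ) := by
            by_contra hq
            push_neg at hq
            have h2 : (↑r : ℝ≥0∞) ≤ f n := by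
              rw [hf, ← ENNReal.ofReal_coe_nnreal]
              exact ENNReal.ofReal_le_ofReal hq
            exact absurd hn.1 (not_lt.mpr h2)
          have hterm : ∀ w : ∀ i : Fin (n + 1), Fin (m i),
              EMetric.diam (cyl (n + 1) (ext_ hm (n + 1) w)) ^ (r : ℝ)
                ≤ ENNReal.ofReal (α (n + 1) ^ (r : ℝ)) := by
            intro w
            calc EMetric.diam (cyl (n + 1) (ext_ hm (n + 1) w)) ^ (r : ℝ)
                ≤ ENNReal.ofReal (α (n + 1)) ^ (r : ℝ) :=
                  ENNReal.rpow_le_rpow (cyl_ediam_le hpos hanti _ _) r.coe_nonneg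
              _ = ENNReal.ofReal (α (n + 1) ^ (r : ℝ)) := ENNReal.ofReal_rpow_of_pos (hpos _)
          calc ∑ w : ∀ i : Fin (n + 1), Fin (m i),
                EMetric.diam (cyl (n + 1) (ext_ hm (n + 1) w)) ^ (r : ℝ)
              ≤ ∑ _w : ∀ i : Fin (n + 1), Fin (m i), ENNReal.ofReal (α (n + 1) ^ (r : ℝ)) :=
                Finset.sum_le_sum fun w _ => hterm w
            _ = (Fintype.card (∀ i : Fin (n + 1), Fin (m i)) : ℝ≥0∞)
                  * ENNReal.ofReal (α (n + 1) ^ (r : ℝ)) := by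
                rw [Finset.sum_const, nsmul_eq_mul, Finset.card_univ]
            _ = ENNReal.ofReal ((Mp m (n + 1) : ℝ) * α (n + 1) ^ (r : ℝ)) := by
                rw [hcard (n + 1), ← ENNReal.ofReal_natCast (Mp m (n + 1)),
                  ← ENNReal.ofReal_mul (by positivity)]
            _ ≤ ENNReal.ofReal 1 :=
                ENNReal.ofReal_le_ofReal (upper_numeric hm hpos hn.2 hq).le
            _ = 1 := ENNReal.ofReal_one
      exact ne_top_of_le_ne_top ENNReal.one_ne_top hμ
    exact absurd hr (not_lt.mpr hdim)
  · -- lower bound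
    apply ENNReal.le_of_forall_nnreal_lt
    intro r hrD
    rcases eq_or_ne r 0 with rfl | hr0
    · simp
    obtain ⟨s, hrs, hsD⟩ := ENNReal.lt_iff_exists_nnreal_btwn.mp hrD
    have hrs' : r < s := by exact_mod_cast hrs
    have hev2 : ∀ᶠ n in atTop, (↑s : ℝ≥0∞) < f n := eventually_lt_of_lt_liminf hsD
    obtain ⟨N, hN⟩ := Filter.eventually_atTop.mp (hev2.and hev1)
    have hkey : ∀ n, N ≤ n → ((Mp m (n + 1) : ℝ≥0∞))⁻¹
        ≤ ENNReal.ofReal (α (n + 1) ^ (s : ℝ)) := by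
      intro n hn
      obtain ⟨hfs, hα1⟩ := hN n hn
      have hq : (s : ℝ) < Real.log (Mp m (n + 1)) / (-Real.log (α (n + 1))) := by
        have h2 := (ENNReal.lt_ofReal_iff_toReal_lt ENNReal.coe_ne_top).mp hfs
        simpa using h2
      have h2 := lower_numeric hm hpos hα1 hq
      have hMpos : (0 : ℝ) < (Mp m (n + 1) : ℝ) := by exact_mod_cast Mp_pos hm _
      calc ((Mp m (n + 1) : ℝ≥0∞))⁻¹ = ENNReal.ofReal ((Mp m (n + 1) : ℝ))⁻¹ := by
            rw [ENNReal.ofReal_inv_of_pos hMpos, ENNReal.ofReal_natCast]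
        _ ≤ _ := ENNReal.ofReal_le_ofReal h2.le
    have hμ : 1 ≤ μH[(s : ℝ)] (Set.univ : Set (SS m)) := by
      rw [hausdorffMeasure_apply]
      have h0 : (0 : ℝ≥0∞) < ENNReal.ofReal (α (N + 1)) := ENNReal.ofReal_pos.mpr (hpos _)
      refine le_iSup₂_of_le (ENNReal.ofReal (α (N + 1))) h0 ?_
      refine le_iInf fun t => le_iInf fun hcov => le_iInf fun hdiam => ?_
      apply ENNReal.le_of_forall_pos_le_add
      intro ε hε _
      have hchoice : ∀ j : ℕ, ∃ (L : ℕ) (p : SS m), t j ⊆ cyl L p ∧ 1 ≤ L ∧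
          ((Mp m L : ℝ≥0∞))⁻¹
            ≤ (⨆ _ : (t j).Nonempty, EMetric.diam (t j) ^ (s : ℝ)) + ↑ε * 2⁻¹ ^ (j + 1) := by
        intro j
        by_cases hmul : ∃ u ∈ t j, ∃ v ∈ t j, u ≠ v
        · obtain ⟨u, hu, v, hv, huv⟩ := hmul
          have hdiamtop : EMetric.diam (t j) ≠ ⊤ :=
            (lt_of_le_of_lt (hdiam j) ENNReal.ofReal_lt_top).ne
          set d := (EMetric.diam (t j)).toReal with hd
          have hdpos : 0 < d := by
            apply ENNReal.toReal_pos _ hdiamtop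
            intro h0'
            have h3 : edist u v ≤ EMetric.diam (t j) := EMetric.edist_le_diam_of_mem hu hv
            rw [h0', nonpos_iff_eq_zero, edist_eq_zero] at h3
            exact huv h3
          have hdle : d ≤ α (N + 1) := by
            have h3 := ENNReal.toReal_mono ENNReal.ofReal_ne_top (hdiam j)
            rwa [ENNReal.toReal_ofReal (hpos (N + 1)).le] at h3
          have hSne : {k | α k ≤ d}.Nonempty := by
            obtain ⟨k, hk⟩ := (hlim.eventually (gt_mem_nhds hdpos)).exists
            exact ⟨k, hk.le⟩
          set n₁ := sInf {k | α k ≤ d} with hn₁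
          have hαn₁ : α n₁ ≤ d := Nat.sInf_mem hSne
          have hn₁N : N + 1 ≤ n₁ := by
            by_contra hlt
            push_neg at hlt
            have h5 : α (N + 1) < α n₁ := hanti (by omega)
            linarith
          have hsubj : t j ⊆ cyl n₁ u := by
            intro y hy i hi
            by_cases hyu : y = u
            · rw [hyu]
            · have hdist2 : aSharp α u y ≤ d := by
                have h3 : edist y u ≤ EMetric.diam (t j) := EMetric.edist_le_diam_of_mem hy hu
                have h4 : dist y u ≤ d := by
                  rw [dist_edist]
                  exact ENNReal.toReal_mono hdiamtop h3
                calc aSharp α u y = aSharp α y u := aSharp_comm α u y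
                  _ = dist y u := rfl
                  _ ≤ d := h4
              have hmemk : α (sInf {k | u k ≠ y k}) ≤ d := by
                rw [aSharp, if_neg (Ne.symm hyu)] at hdist2
                exact hdist2
              have hk2 : n₁ ≤ sInf {k | u k ≠ y k} := Nat.sInf_le hmemk
              exact (agree_below (lt_of_lt_of_le hi hk2)).symm
          refine ⟨n₁, u, hsubj, by omega, ?_⟩
          obtain ⟨n, hneq⟩ : ∃ n, n₁ = n + 1 := ⟨n₁ - 1, by omega⟩
          rw [hneq] at hαn₁ ⊢
          have h5 := hkey n (by omega)
          have h6 : ENNReal.ofReal (α (n + 1) ^ (s : ℝ)) ≤ ENNReal.ofReal (d ^ (s : ℝ)) :=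
            ENNReal.ofReal_le_ofReal (Real.rpow_le_rpow (hpos _).le hαn₁ s.coe_nonneg)
          have h7 : ENNReal.ofReal (d ^ (s : ℝ)) = EMetric.diam (t j) ^ (s : ℝ) := by
            rw [← ENNReal.ofReal_rpow_of_pos hdpos, ENNReal.ofReal_toReal hdiamtop]
          have hne3 : (t j).Nonempty := ⟨u, hu⟩
          have h8 : EMetric.diam (t j) ^ (s : ℝ)
              = ⨆ _ : (t j).Nonempty, EMetric.diam (t j) ^ (s : ℝ) := by
            rw [iSup_pos hne3]
          exact le_trans (le_trans h5 (h6.trans_eq h7)) (h8.le.trans le_self_add)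
        · -- at most one point
          have hεne : (↑ε : ℝ≥0∞)⁻¹ * 2 ^ (j + 1) ≠ ⊤ := by
            apply ENNReal.mul_ne_top
            · exact ENNReal.inv_ne_top.mpr (by exact_mod_cast hε.ne')
            · exact ENNReal.pow_ne_top ENNReal.ofNat_ne_top
          obtain ⟨M₀, hM₀⟩ := ENNReal.exists_nat_gt hεne
          set L := M₀ + 1 with hL
          have hML : (↑ε : ℝ≥0∞)⁻¹ * 2 ^ (j + 1) ≤ (Mp m L : ℝ≥0∞) := by
            refine le_trans hM₀.le ?_
            have h3 : M₀ ≤ Mp m L := by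
              calc M₀ ≤ 2 ^ M₀ := (Nat.lt_two_pow_self (n := M₀)).le
                _ ≤ 2 ^ L := Nat.pow_le_pow_right (by norm_num) (by omega)
                _ ≤ Mp m L := two_pow_le_Mp hm L
            exact_mod_cast h3
          have hwL : ((Mp m L : ℝ≥0∞))⁻¹ ≤ ↑ε * 2⁻¹ ^ (j + 1) := by
            have h3 := ENNReal.inv_le_inv.mpr hML
            rwa [ENNReal.mul_inv (Or.inl (ENNReal.inv_ne_zero.mpr ENNReal.coe_ne_top))
              (Or.inl (ENNReal.inv_ne_top.mpr (by exact_mod_cast hε.ne'))), inv_inv,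
              ENNReal.inv_pow] at h3
          by_cases hne2 : (t j).Nonempty
          · obtain ⟨p, hp⟩ := hne2
            refine ⟨L, p, ?_, by omega, le_trans hwL le_add_self⟩
            intro y hy
            have hyp : y = p := by
              by_contra hyp
              exact hmul ⟨y, hy, p, hp, hyp⟩
            rw [hyp]
            exact mem_cyl_self _ _
          · refine ⟨L, x0 hm, ?_, by omega, le_trans hwL le_add_self⟩
            intro y hy
            exact absurd ⟨y, hy⟩ hne2
      choose len pt hsub hlen1 hw using hchoice
      have hcovc : (Set.univ : Set (SS m)) ⊆ ⋃ j, cyl (len j) (pt j) := by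
        intro x hx
        obtain ⟨j, hj⟩ := Set.mem_iUnion.mp (hcov hx)
        exact Set.mem_iUnion.2 ⟨j, hsub j hj⟩
      obtain ⟨J, hJ⟩ := (isCompact_univ_ss hm hpos hanti hlim).elim_finite_subcover
        (fun j => cyl (len j) (pt j)) (fun j => cyl_isOpen hpos hanti _ (hlen1 j)) hcovc
      have hkraft := kraft hm J len pt hJ
      have hsum1 : ∑ j ∈ J, ((Mp m (len j) : ℝ≥0∞))⁻¹ ≤
          ∑' j : ℕ, ((⨆ _ : (t j).Nonempty, EMetric.diam (t j) ^ (s : ℝ))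
            + ↑ε * 2⁻¹ ^ (j + 1)) :=
        le_trans (Finset.sum_le_sum fun j _ => hw j) (ENNReal.sum_le_tsum J)
      have hgeo : ∑' j : ℕ, (↑ε : ℝ≥0∞) * 2⁻¹ ^ (j + 1) = ↑ε := by
        rw [ENNReal.tsum_mul_left]
        have h3 : ∑' j : ℕ, (2⁻¹ : ℝ≥0∞) ^ (j + 1) = 1 := by
          simp only [pow_succ]
          rw [ENNReal.tsum_mul_right, ENNReal.tsum_geometric]
          rw [ENNReal.one_sub_inv_two, inv_inv]
          exact ENNReal.mul_inv_cancel (by norm_num) ENNReal.ofNat_ne_top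
        rw [h3, mul_one]
      calc (1 : ℝ≥0∞) ≤ ∑ j ∈ J, ((Mp m (len j) : ℝ≥0∞))⁻¹ := hkraft
        _ ≤ _ := hsum1
        _ = (∑' j : ℕ, ⨆ _ : (t j).Nonempty, EMetric.diam (t j) ^ (s : ℝ))
              + ∑' j : ℕ, (↑ε : ℝ≥0∞) * 2⁻¹ ^ (j + 1) := ENNReal.tsum_add
        _ = (∑' j : ℕ, ⨆ _ : (t j).Nonempty, EMetric.diam (t j) ^ (s : ℝ)) + ↑ε := by
              rw [hgeo]
    have hμne : μH[(s : ℝ)] (Set.univ : Set (SS m)) ≠ 0 := by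
      intro h0
      rw [h0] at hμ
      exact absurd hμ (by norm_num)
    have htop := (hausdorffMeasure_zero_or_top
      (show (r : ℝ) < (s : ℝ) from by exact_mod_cast hrs')
      (Set.univ : Set (SS m))).resolve_left hμne
    exact le_dimH_of_hausdorffMeasure_eq_top htop
end

section
/- Let α(n) = 1/(n+1) and let S(2) = {0,1}^{ℤ_{≥0}} with ultrametric α♯(x,y) = 1/(1 + min{n : x(n) ≠ y(n)}). Then the Hausdorff dimension of (S(2), α♯) is infinite (and hence so are its packing, upper box, and Assouad dimensions). -/
open Metric Set Filter
open scoped ENNReal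

/-- The Assouad dimension of a metric space with distance function `d`. -/
noncomputable def assouadDim {X : Type} (d : X → X → ℝ) : ℝ≥0∞ :=
  sInf { l : ℝ≥0∞ | ∃ lam : ℝ, 0 < lam ∧ l = ENNReal.ofReal lam ∧
    ∃ C : ℝ, 0 < C ∧ ∀ x : X, ∀ R r : ℝ, 0 < r → r < R →
      coverNum d {y | d x y ≤ R} r ≤ ENNReal.ofReal (C * (R / r) ^ lam) }

/-- The packing pre-measure at scale `δ`: the supremum of `∑ rᵢ^s` over countable packings of
`A` by disjoint closed balls with centers in `A` and radii in `(0, δ)`. -/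
noncomputable def prePack {X : Type} (d : X → X → ℝ) (s δ : ℝ) (A : Set X) : ℝ≥0∞ :=
  ⨆ (I : Set ℕ) (c : ℕ → X) (ρ : ℕ → ℝ)
    (_ : ∀ i ∈ I, c i ∈ A ∧ ρ i ∈ Set.Ioo 0 δ)
    (_ : ∀ i ∈ I, ∀ j ∈ I, i ≠ j →
      Disjoint {y | d (c i) y ≤ ρ i} {y | d (c j) y ≤ ρ j}),
    ∑' (i : I), ENNReal.ofReal (ρ i.1 ^ s)

/-- The `s`-dimensional packing pre-measure. -/
noncomputable def prePack0 {X : Type} (d : X → X → ℝ) (s : ℝ) (A : Set X) : ℝ≥0∞ :=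
  ⨅ (δ : ℝ) (_ : 0 < δ), prePack d s δ A

/-- The `s`-dimensional packing measure. -/
noncomputable def packMeasure {X : Type} (d : X → X → ℝ) (s : ℝ) (A : Set X) : ℝ≥0∞ :=
  ⨅ (S : ℕ → Set X) (_ : A ⊆ ⋃ i, S i), ∑' i, prePack0 d s (S i)

/-- The packing dimension of `(X, d)`. -/
noncomputable def packDim {X : Type} (d : X → X → ℝ) : ℝ≥0∞ :=
  sInf {l : ℝ≥0∞ | ∃ s : ℝ, 0 ≤ s ∧ l = ENNReal.ofReal s ∧ packMeasure d s Set.univ = 0}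


/-- The constant sequence `mᵢ = 2`. -/
def mTwo : ℕ → ℕ := fun _ => 2

/-- `α(n) = 1/(n+1)`. -/
noncomputable def alphaInv : ℕ → ℝ := fun n => 1 / ((n : ℝ) + 1)

theorem alphaInv_pos : ∀ n, 0 < alphaInv n := fun n => by
  unfold alphaInv; positivity

theorem alphaInv_anti : Antitone alphaInv := fun a b h => by
  unfold alphaInv
  gcongr

/-- The metric space `(S(2), α♯)` for `α(n) = 1/(n+1)`. -/
noncomputable def M14 : MetricSpace (SS mTwo) := ssMetric alphaInv alphaInv_pos alphaInv_anti


/-! ### Auxiliary development -/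

open scoped NNReal Topology
open MeasureTheory

noncomputable instance : MetricSpace (SS mTwo) := M14

lemma SSdist_eq (x y : SS mTwo) : dist x y = aSharp alphaInv x y := rfl

lemma dd_le_one (x y : SS mTwo) : aSharp alphaInv x y ≤ 1 := by
  by_cases h : x = y
  · rw [h, aSharp_self]; norm_num
  · rw [aSharp, if_neg h]
    unfold alphaInv
    rw [div_le_one (by positivity)]
    have : (0:ℝ) ≤ ((sInf {n | x n ≠ y n} : ℕ) : ℝ) := Nat.cast_nonneg _
    linarith

lemma agree_of_lt {x y : SS mTwo} {n : ℕ} (h : aSharp alphaInv x y < 1 / ((n:ℝ)+1)) :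
    ∀ k ≤ n, x k = y k := by
  intro k hk
  by_cases hxy : x = y
  · rw [hxy]
  · rw [aSharp, if_neg hxy] at h
    unfold alphaInv at h
    have h2 : (0:ℝ) < ((sInf {i | x i ≠ y i} : ℕ) : ℝ) + 1 := by positivity
    have h3 : (n:ℝ) + 1 < ((sInf {i | x i ≠ y i} : ℕ) : ℝ) + 1 := (one_div_lt_one_div (by positivity) (by linarith)).mp h
    have h4 : n < sInf {i | x i ≠ y i} := by exact_mod_cast (by linarith : (n:ℝ) < ((sInf {i | x i ≠ y i} : ℕ) : ℝ))
    exact not_not.mp (Nat.notMem_of_lt_sInf (lt_of_le_of_lt hk h4))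

lemma le_of_agree {x y : SS mTwo} {n : ℕ} (h : ∀ k ≤ n, x k = y k) :
    aSharp alphaInv x y ≤ 1 / ((n:ℝ) + 2) := by
  by_cases hxy : x = y
  · rw [hxy, aSharp_self]; positivity
  · rw [aSharp, if_neg hxy]
    have hmem : sInf {i | x i ≠ y i} ∈ {i | x i ≠ y i} := Nat.sInf_mem (Function.ne_iff.mp hxy)
    have hgt : n + 1 ≤ sInf {i | x i ≠ y i} := by
      by_contra hc
      push_neg at hc
      exact hmem (h _ (Nat.lt_succ_iff.mp hc))
    refine (alphaInv_anti hgt).trans_eq ?_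
    unfold alphaInv
    push_cast
    ring_nf

/-- Extension of a finite word by zeros. -/
def ext0 (n : ℕ) (w : Fin (n+1) → Fin 2) : SS mTwo := fun i =>
  if h : i < n + 1 then w ⟨i, h⟩ else (0 : Fin 2)

lemma coverNum_lower (n : ℕ) {r : ℝ} (hr : r < 1 / ((n:ℝ)+1)) :
    (2:ℝ≥0∞) ^ (n+1) ≤ coverNum (aSharp alphaInv) (Set.univ : Set (SS mTwo)) r := by
  rw [coverNum]
  refine le_iInf fun A => le_iInf fun hA => ?_
  have key : ∀ w : Fin (n+1) → Fin 2, ∃ a ∈ A, aSharp alphaInv a (ext0 n w) ≤ r := by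
    intro w
    have := hA (Set.mem_univ (ext0 n w))
    simpa using this
  choose a ha hd using key
  have hinj : Function.Injective a := by
    intro w w' hww
    funext k
    have e1 : ∀ i ≤ n, a w i = ext0 n w i := agree_of_lt (lt_of_le_of_lt (hd w) hr)
    have e2 : ∀ i ≤ n, a w' i = ext0 n w' i := agree_of_lt (lt_of_le_of_lt (hd w') hr)
    have hthis : ext0 n w (k:ℕ) = ext0 n w' (k:ℕ) := by
      rw [← e1 _ (Nat.lt_succ_iff.mp k.isLt), ← e2 _ (Nat.lt_succ_iff.mp k.isLt), hww]
    simp [ext0, k.isLt] at hthis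
    exact hthis
  have hcard : ((2^(n+1) : ℕ) : ℕ∞) ≤ A.encard := by
    have h1 : (Set.range a).encard ≤ A.encard := Set.encard_mono (Set.range_subset_iff.mpr ha)
    have h2 : (Set.range a).encard = ((2^(n+1) : ℕ) : ℕ∞) := by
      rw [← Set.image_univ, Set.InjOn.encard_image (hinj.injOn), Set.encard_univ,
        ENat.card_eq_coe_fintype_card]
      norm_cast
      simp [Fintype.card_fun]
    rw [← h2]; exact h1
  have := ENat.toENNReal_le.mpr hcard
  refine le_trans (le_of_eq ?_) this
  push_cast
  rfl

lemma nat_pow_le (n k : ℕ) (hn : 0 < n) : (k+1)^n ≤ n^n * 2^k := by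
  have h1 : k + 1 ≤ (k / n + 1) * n := (Nat.div_lt_iff_lt_mul hn).mp (Nat.lt_succ_self (k/n))
  calc (k+1)^n ≤ ((k/n+1)*n)^n := Nat.pow_le_pow_left h1 n
    _ = n^n * (k/n+1)^n := by rw [mul_pow, mul_comm]
    _ ≤ n^n * (2^(k/n))^n := by
        gcongr
        exact Nat.lt_two_pow_self
    _ = n^n * 2^(k/n*n) := by rw [← pow_mul]
    _ ≤ n^n * 2^k := by
        gcongr
        · exact one_le_two
        · exact Nat.div_mul_le_self k n


/-! ### The binary-expansion map -/

noncomputable def fmap (x : SS mTwo) : ℝ := ∑' i, (x i : ℝ) / 2 ^ (i+1)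

lemma term_nonneg (x : SS mTwo) (i : ℕ) : 0 ≤ (x i : ℝ)/2^(i+1) := by positivity

lemma term_le (x : SS mTwo) (i : ℕ) : (x i : ℝ)/2^(i+1) ≤ (1/2)^(i+1) := by
  have hval : ((x i : ℕ) : ℝ) ≤ 1 := by
    have : (x i : ℕ) < 2 := (x i).isLt
    exact_mod_cast Nat.lt_succ_iff.mp this
  rw [div_pow, one_pow]
  gcongr

lemma hsummable (x : SS mTwo) : Summable (fun i => (x i : ℝ)/2^(i+1)) := by
  refine Summable.of_nonneg_of_le (term_nonneg x) (term_le x) ?_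
  have := (summable_geometric_of_lt_one (by norm_num : (0:ℝ) ≤ 1/2) (by norm_num)).mul_left (1/2 : ℝ)
  refine this.congr fun i => ?_
  rw [pow_succ]
  ring

lemma fmap_diff (x y : SS mTwo) (k : ℕ) (hag : ∀ i < k, x i = y i) :
    |fmap x - fmap y| ≤ (1/2:ℝ)^k := by
  have hsx := hsummable x
  have hsy := hsummable y
  have hus : Summable (fun i => (x i : ℝ)/2^(i+1) - (y i : ℝ)/2^(i+1)) := hsx.sub hsy
  have hdiff : fmap x - fmap y = ∑' i, ((x i : ℝ)/2^(i+1) - (y i : ℝ)/2^(i+1)) :=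
    (Summable.tsum_sub hsx hsy).symm
  have hsplit : ∑' i, ((x i : ℝ)/2^(i+1) - (y i : ℝ)/2^(i+1))
      = ∑' i, ((x (i+k) : ℝ)/2^(i+k+1) - (y (i+k) : ℝ)/2^(i+k+1)) := by
    rw [← Summable.sum_add_tsum_nat_add k hus, Finset.sum_eq_zero, zero_add]
    intro i hi
    rw [hag i (Finset.mem_range.mp hi), sub_self]
  have hgeo : Summable (fun i : ℕ => (1/2:ℝ)^(i+k+1)) := by
    have h := (summable_geometric_of_lt_one (by norm_num : (0:ℝ) ≤ 1/2)
      (by norm_num : (1/2:ℝ) < 1)).mul_left ((1/2:ℝ)^(k+1))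
    refine h.congr fun i => ?_
    rw [← pow_add]
    ring
  have habs : ∀ i : ℕ, |(x (i+k) : ℝ)/2^(i+k+1) - (y (i+k) : ℝ)/2^(i+k+1)| ≤ (1/2:ℝ)^(i+k+1) := by
    intro i
    have h1 := term_nonneg x (i+k)
    have h2 := term_le x (i+k)
    have h3 := term_nonneg y (i+k)
    have h4 := term_le y (i+k)
    rw [abs_sub_le_iff]
    constructor <;> linarith
  have habs_sum : Summable (fun i : ℕ => |(x (i+k) : ℝ)/2^(i+k+1) - (y (i+k) : ℝ)/2^(i+k+1)|) :=
    Summable.of_nonneg_of_le (fun i => abs_nonneg _) habs hgeo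
  have hle1 : |∑' i, ((x (i+k) : ℝ)/2^(i+k+1) - (y (i+k) : ℝ)/2^(i+k+1))|
      ≤ ∑' i, |(x (i+k) : ℝ)/2^(i+k+1) - (y (i+k) : ℝ)/2^(i+k+1)| := by
    have h := norm_tsum_le_tsum_norm
      (f := fun i : ℕ => (x (i+k) : ℝ)/2^(i+k+1) - (y (i+k) : ℝ)/2^(i+k+1))
      (by simpa [Real.norm_eq_abs] using habs_sum)
    simpa [Real.norm_eq_abs] using h
  have hle2 := Summable.tsum_le_tsum habs habs_sum hgeo
  have hgeoval : ∑' i : ℕ, (1/2:ℝ)^(i+k+1) = (1/2:ℝ)^k := by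
    calc ∑' i : ℕ, (1/2:ℝ)^(i+k+1) = ∑' i : ℕ, (1/2:ℝ)^(k+1) * (1/2:ℝ)^i := by
          refine tsum_congr fun i => ?_
          rw [← pow_add]
          ring
      _ = (1/2:ℝ)^(k+1) * ∑' i : ℕ, (1/2:ℝ)^i := tsum_mul_left
      _ = (1/2:ℝ)^k := by
          rw [tsum_geometric_of_lt_one (by norm_num) (by norm_num), pow_succ]
          norm_num
          ring
  rw [hdiff, hsplit]
  exact hle1.trans (hle2.trans (le_of_eq hgeoval))

lemma fmap_holder (n : ℕ) (hn : 0 < n) : HolderWith ((n:ℝ≥0)^n) (n : ℝ≥0) fmap := by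
  intro x y
  rcases eq_or_ne x y with rfl | hxy
  · simp
  · have hdist : dist x y = alphaInv (sInf {i | x i ≠ y i}) := by
      rw [SSdist_eq, aSharp, if_neg hxy]
    set k := sInf {i | x i ≠ y i} with hk
    have hag : ∀ i < k, x i = y i := fun i hi => not_not.mp (Nat.notMem_of_lt_sInf hi)
    have hb := fmap_diff x y k hag
    have hd0 : 0 < alphaInv k := alphaInv_pos k
    have hkey : |fmap x - fmap y| ≤ (n:ℝ)^n * alphaInv k ^ n := by
      refine hb.trans ?_
      have hnat : (((k+1)^n : ℕ) : ℝ) ≤ (((n^n * 2^k : ℕ)) : ℝ) := by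
        exact_mod_cast nat_pow_le n k hn
      push_cast at hnat
      unfold alphaInv
      rw [div_pow, one_pow, div_pow, one_pow, mul_one_div,
        div_le_div_iff₀ (by positivity) (by positivity), one_mul]
      exact hnat
    calc edist (fmap x) (fmap y) = ENNReal.ofReal |fmap x - fmap y| := by
          rw [edist_dist, Real.dist_eq]
      _ ≤ ENNReal.ofReal ((n:ℝ)^n * alphaInv k ^ n) := ENNReal.ofReal_le_ofReal hkey
      _ = ENNReal.ofReal ((n:ℝ)^n) * ENNReal.ofReal (alphaInv k ^ n) :=
          ENNReal.ofReal_mul (by positivity)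
      _ = ((n:ℝ≥0)^n : ℝ≥0) * (ENNReal.ofReal (alphaInv k)) ^ n := by
          rw [ENNReal.ofReal_pow hd0.le, ENNReal.ofReal_pow (by positivity)]
          norm_cast
      _ = ((n:ℝ≥0)^n : ℝ≥0) * ENNReal.ofReal (dist x y) ^ n := by rw [hdist]
      _ = ((n:ℝ≥0)^n : ℝ≥0) * edist x y ^ ((n : ℝ≥0) : ℝ) := by
          rw [edist_dist, NNReal.coe_natCast, ENNReal.rpow_natCast]

/-! ### Binary digits -/

noncomputable def dig (y : ℝ) (n : ℕ) : ℤ := ⌊y * 2^(n+1)⌋ - 2 * ⌊y * 2^n⌋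

lemma dig_bounds (y : ℝ) (n : ℕ) : 0 ≤ dig y n ∧ dig y n ≤ 1 := by
  have hfl := Int.floor_le (y * 2^n)
  have hfu := Int.lt_floor_add_one (y * 2^n)
  have h1 : 2 * ⌊y * 2^n⌋ ≤ ⌊y * 2^(n+1)⌋ := by
    apply Int.le_floor.mpr
    push_cast
    rw [pow_succ]
    nlinarith
  have h2 : ⌊y * 2^(n+1)⌋ < 2 * ⌊y * 2^n⌋ + 2 := by
    apply Int.floor_lt.mpr
    push_cast
    rw [pow_succ]
    nlinarith
  unfold dig
  omega

noncomputable def digSeq (y : ℝ) : SS mTwo := fun n => if dig y n = 1 then (1 : Fin 2) else (0 : Fin 2)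

lemma digSeq_val (y : ℝ) (n : ℕ) : ((digSeq y n : ℕ) : ℝ) = (dig y n : ℝ) := by
  obtain ⟨h0, h1⟩ := dig_bounds y n
  unfold digSeq
  by_cases h : dig y n = 1
  · simp [h]
  · have h2 : dig y n = 0 := by omega
    simp [h, h2]

lemma partial_sum (y : ℝ) (hy : y ∈ Set.Ico (0:ℝ) 1) (N : ℕ) :
    ∑ n ∈ Finset.range N, ((digSeq y n : ℕ) : ℝ)/2^(n+1) = (⌊y * 2^N⌋ : ℝ)/2^N := by
  induction N with
  | zero =>
      simp only [Finset.range_zero, Finset.sum_empty, pow_zero, mul_one]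
      rw [Int.floor_eq_zero_iff.mpr (by simpa using hy)]
      norm_num
  | succ N ih =>
      rw [Finset.sum_range_succ, ih, digSeq_val]
      unfold dig
      push_cast
      have h1 : (0:ℝ) < 2^N := by positivity
      have h2 : (0:ℝ) < 2^(N+1) := by positivity
      field_simp
      ring

lemma fmap_digSeq (y : ℝ) (hy : y ∈ Set.Ico (0:ℝ) 1) : fmap (digSeq y) = y := by
  have hsum := hsummable (digSeq y)
  have hb : ∀ N : ℕ, ‖(⌊y*2^N⌋ : ℝ)/2^N - y‖ ≤ (1/2:ℝ)^N := by
    intro N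
    have h2 : (0:ℝ) < 2^N := by positivity
    have hfl := Int.floor_le (y * 2^N)
    have hfu := Int.lt_floor_add_one (y * 2^N)
    have e : (⌊y*2^N⌋:ℝ)/2^N - y = ((⌊y*2^N⌋:ℝ) - y*2^N)/2^N := by field_simp
    rw [Real.norm_eq_abs, e, abs_div, abs_of_pos h2]
    have hnum : |(⌊y*2^N⌋:ℝ) - y*2^N| ≤ 1 := by
      rw [abs_le]
      constructor <;> nlinarith
    calc |(⌊y*2^N⌋:ℝ) - y*2^N|/2^N ≤ 1/2^N := by gcongr
      _ = (1/2:ℝ)^N := by rw [div_pow, one_pow]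
  have hgeo : Tendsto (fun N : ℕ => ((1:ℝ)/2)^N) atTop (𝓝 0) :=
    tendsto_pow_atTop_nhds_zero_of_lt_one (by norm_num) (by norm_num)
  have h0 : Tendsto (fun N : ℕ => (⌊y*2^N⌋ : ℝ)/2^N - y) atTop (𝓝 0) :=
    squeeze_zero_norm hb hgeo
  have h1 : Tendsto (fun N : ℕ => (⌊y*2^N⌋ : ℝ)/2^N) atTop (𝓝 y) := by
    have := h0.add_const y
    simpa using this
  have h2 : Tendsto (fun N : ℕ => ∑ n ∈ Finset.range N, ((digSeq y n : ℕ) : ℝ)/2^(n+1))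
      atTop (𝓝 y) := by
    refine h1.congr fun N => ?_
    rw [partial_sum y hy N]
  have h3 := hsum.hasSum.tendsto_sum_nat
  exact tendsto_nhds_unique h3 h2

lemma Ico_subset_range : Set.Ico (0:ℝ) 1 ⊆ Set.range fmap :=
  fun y hy => ⟨digSeq y, fmap_digSeq y hy⟩

theorem dimH_SS_top : dimH (Set.univ : Set (SS mTwo)) = ⊤ := by
  by_contra h
  obtain ⟨n, hn⟩ := ENNReal.exists_nat_gt h
  have hH := fmap_holder (n+1) n.succ_pos
  have h1 : dimH (Set.range fmap) ≤ dimH (Set.univ : Set (SS mTwo)) / (((n+1:ℕ) : ℝ≥0)) :=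
    hH.dimH_range_le (by exact_mod_cast n.succ_pos)
  have h2 : (1:ℝ≥0∞) ≤ dimH (Set.range fmap) := by
    have hIco : dimH (Set.Ico (0:ℝ) 1) = 1 := by
      rw [Real.dimH_of_mem_nhds (Ico_mem_nhds (by norm_num) (by norm_num) :
        Set.Ico (0:ℝ) 1 ∈ 𝓝 (1/2:ℝ))]
      simp
    rw [← hIco]
    exact dimH_mono Ico_subset_range
  have h3 : ((((n+1:ℕ) : ℝ≥0)) : ℝ≥0∞) ≤ dimH (Set.univ : Set (SS mTwo)) := by
    have h4 := h2.trans h1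
    rw [ENNReal.le_div_iff_mul_le (Or.inl (by exact_mod_cast n.succ_pos.ne'))
      (Or.inl ENNReal.coe_ne_top), one_mul] at h4
    exact h4
  have h5 : (n : ℝ≥0∞) ≤ dimH (Set.univ : Set (SS mTwo)) := by
    refine le_trans ?_ h3
    norm_cast
    omega
  exact absurd h5 (not_le.mpr hn)

theorem hmeasure_top [MeasurableSpace (SS mTwo)] [BorelSpace (SS mTwo)] {s : ℝ} (hs : 0 ≤ s) :
    μH[s] (Set.univ : Set (SS mTwo)) = ⊤ := by
  have h1 : (s.toNNReal : ℝ≥0∞) < dimH (Set.univ : Set (SS mTwo)) := by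
    rw [dimH_SS_top]; exact ENNReal.coe_lt_top
  have h2 := hausdorffMeasure_of_lt_dimH h1
  rwa [Real.coe_toNNReal s hs] at h2

/-! ### Packing dimension -/

lemma packing_le_prePack (A : Set (SS mTwo)) (s δ ρ : ℝ) (hρ : 0 < ρ) (hρδ : ρ < δ)
    (N : ℕ) (c : Fin N → SS mTwo) (hmem : ∀ i, c i ∈ A)
    (hdisj : ∀ i j, i ≠ j → Disjoint {y | aSharp alphaInv (c i) y ≤ ρ}
      {y | aSharp alphaInv (c j) y ≤ ρ}) :
    (N : ℝ≥0∞) * ENNReal.ofReal (ρ ^ s) ≤ prePack (aSharp alphaInv) s δ A := by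
  rcases Nat.eq_zero_or_pos N with rfl | hN
  · simp
  rw [prePack]
  set cc : ℕ → SS mTwo := fun j => if h : j < N then c ⟨j, h⟩ else c ⟨0, hN⟩ with hcc
  have hcc_eq : ∀ i (h : i < N), cc i = c ⟨i, h⟩ := fun i h => dif_pos h
  have hcond : ∀ i ∈ {j | j < N}, cc i ∈ A ∧ (fun _ : ℕ => ρ) i ∈ Set.Ioo 0 δ := by
    intro i hi
    rw [hcc_eq i hi]
    exact ⟨hmem _, ⟨hρ, hρδ⟩⟩
  have hdis : ∀ i ∈ {j | j < N}, ∀ j ∈ {j | j < N}, i ≠ j →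
      Disjoint {y | aSharp alphaInv (cc i) y ≤ (fun _ : ℕ => ρ) i}
        {y | aSharp alphaInv (cc j) y ≤ (fun _ : ℕ => ρ) j} := by
    intro i hi j hj hij
    rw [hcc_eq i hi, hcc_eq j hj]
    exact hdisj _ _ (Fin.ne_of_val_ne hij)
  refine le_iSup_of_le {j | j < N} (le_iSup_of_le cc
    (le_iSup_of_le (fun _ => ρ) (le_iSup_of_le hcond (le_iSup_of_le hdis ?_))))
  have e : ∑' (i : ↑{j | j < N}), ENNReal.ofReal (ρ ^ s)
      = ∑' (j : ℕ), Set.indicator {j | j < N} (fun _ => ENNReal.ofReal (ρ ^ s)) j :=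
    tsum_subtype {j | j < N} (fun _ : ℕ => ENNReal.ofReal (ρ ^ s))
  show (N : ℝ≥0∞) * ENNReal.ofReal (ρ ^ s) ≤ ∑' (i : ↑{j | j < N}), ENNReal.ofReal (ρ ^ s)
  rw [e]
  calc (N : ℝ≥0∞) * ENNReal.ofReal (ρ ^ s)
      = ∑ j ∈ Finset.range N, Set.indicator {j | j < N}
          (fun _ => ENNReal.ofReal (ρ ^ s)) j := by
        have e2 : ∀ j ∈ Finset.range N, Set.indicator {j | j < N}
            (fun _ => ENNReal.ofReal (ρ ^ s)) j = ENNReal.ofReal (ρ ^ s) := fun j hj =>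
          Set.indicator_of_mem (show j ∈ {j | j < N} from Finset.mem_range.mp hj) _
        rw [Finset.sum_congr rfl e2, Finset.sum_const, Finset.card_range, nsmul_eq_mul]
    _ ≤ _ := ENNReal.sum_le_tsum _

lemma diam_ball_le (cpt : SS mTwo) (ρ : ℝ) :
    EMetric.diam {y | aSharp alphaInv cpt y ≤ ρ} ≤ ENNReal.ofReal ρ := by
  apply EMetric.diam_le
  intro x hx y hy
  rw [edist_dist]
  apply ENNReal.ofReal_le_ofReal
  calc dist x y ≤ max (aSharp alphaInv x cpt) (aSharp alphaInv cpt y) :=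
        aSharp_strong alphaInv alphaInv_pos alphaInv_anti x cpt y
    _ ≤ ρ := max_le (by rw [aSharp_comm]; exact hx) hy

lemma hmeas_le_prePack0 [MeasurableSpace (SS mTwo)] [BorelSpace (SS mTwo)]
    {s : ℝ} (hs : 0 ≤ s) (A : Set (SS mTwo)) :
    μH[s] A ≤ prePack0 (aSharp alphaInv) s A := by
  rw [prePack0]
  refine le_iInf fun δ => le_iInf fun hδ => ?_
  rcases eq_or_ne (prePack (aSharp alphaInv) s δ A) ⊤ with hPt | hPt
  · rw [hPt]; exact le_top
  rw [MeasureTheory.Measure.hausdorffMeasure_apply]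
  refine iSup₂_le fun r hr => ?_
  set ρ : ℝ := min (δ/2) ((min r 1).toReal) with hρdef
  have hmin_ne : min r 1 ≠ 0 := (lt_min hr one_pos).ne'
  have hmin_lt : min r 1 ≠ ⊤ := ne_top_of_le_ne_top ENNReal.one_ne_top (min_le_right _ _)
  have hρpos : 0 < ρ := lt_min (by linarith) (ENNReal.toReal_pos hmin_ne hmin_lt)
  have hρδ : ρ < δ := lt_of_le_of_lt (min_le_left _ _) (by linarith)
  have hρr : ENNReal.ofReal ρ ≤ r :=
    le_trans (ENNReal.ofReal_le_ofReal (min_le_right _ _))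
      (le_trans (le_of_eq (ENNReal.ofReal_toReal hmin_lt)) (min_le_left _ _))
  set cρ := ENNReal.ofReal (ρ ^ s) with hcρ
  have hcρ0 : cρ ≠ 0 := (ENNReal.ofReal_pos.mpr (Real.rpow_pos_of_pos hρpos s)).ne'
  have hcρt : cρ ≠ ⊤ := ENNReal.ofReal_ne_top
  obtain ⟨B, hB⟩ := ENNReal.exists_nat_gt (ENNReal.div_lt_top hPt hcρ0).ne
  classical
  set pred : ℕ → Prop := fun n => ∃ c : Fin n → SS mTwo, (∀ i, c i ∈ A) ∧
    ∀ i j, i ≠ j → Disjoint {y | aSharp alphaInv (c i) y ≤ ρ}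
      {y | aSharp alphaInv (c j) y ≤ ρ} with hpreddef
  have hbnd : ∀ n, pred n → n ≤ B := by
    rintro n ⟨c, hc1, hc2⟩
    by_contra hgt
    push_neg at hgt
    have h1 : (n : ℝ≥0∞) * cρ ≤ prePack (aSharp alphaInv) s δ A :=
      packing_le_prePack A s δ ρ hρpos hρδ n c hc1 hc2
    have h2 : prePack (aSharp alphaInv) s δ A < (B:ℝ≥0∞) * cρ :=
      (ENNReal.div_lt_iff (Or.inl hcρ0) (Or.inl hcρt)).mp hB
    have h3 : (B:ℝ≥0∞) * cρ < (n:ℝ≥0∞) * cρ :=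
      ENNReal.mul_lt_mul_left hcρ0 hcρt (by exact_mod_cast hgt)
    exact absurd h1 (not_le.mpr (h2.trans h3))
  have hpred0 : pred 0 := ⟨fun i => i.elim0, fun i => i.elim0, fun i => i.elim0⟩
  set n₀ := Nat.findGreatest pred B with hn₀def
  have hn₀ : pred n₀ := Nat.findGreatest_spec (Nat.zero_le B) hpred0
  have hmax : ¬ pred (n₀ + 1) := by
    intro hp
    have := Nat.le_findGreatest (hbnd _ hp) hp
    omega
  obtain ⟨c, hcmem, hcdisj⟩ := hn₀
  set t : ℕ → Set (SS mTwo) :=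
    fun j => if h : j < n₀ then {y | aSharp alphaInv (c ⟨j,h⟩) y ≤ ρ} else ∅ with htdef
  have hcov : A ⊆ ⋃ j, t j := by
    intro a haA
    by_contra hnot
    apply hmax
    refine ⟨fun i => if h : (i:ℕ) < n₀ then c ⟨(i:ℕ), h⟩ else a, fun i => ?_, fun i j hij => ?_⟩
    · by_cases h : (i:ℕ) < n₀ <;> simp only [dif_pos, dif_neg, h, dite_true, dite_false]
      · exact hcmem _
      · exact haA
    · have key : ∀ (p : Fin (n₀+1)) (hp : (p:ℕ) < n₀) (z : SS mTwo),
          aSharp alphaInv (c ⟨(p:ℕ), hp⟩) z ≤ ρ → aSharp alphaInv a z ≤ ρ → False := by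
        intro p hp z hz1 hz2
        apply hnot
        refine Set.mem_iUnion.mpr ⟨(p:ℕ), ?_⟩
        rw [htdef]
        simp only [dif_pos hp]
        show aSharp alphaInv (c ⟨(p:ℕ), hp⟩) a ≤ ρ
        calc aSharp alphaInv (c ⟨(p:ℕ), hp⟩) a
            ≤ max (aSharp alphaInv (c ⟨(p:ℕ), hp⟩) z) (aSharp alphaInv z a) :=
              aSharp_strong alphaInv alphaInv_pos alphaInv_anti _ z a
          _ ≤ ρ := max_le hz1 (by rw [aSharp_comm]; exact hz2)
      by_cases hi : (i:ℕ) < n₀ <;> by_cases hj : (j:ℕ) < n₀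
      · simp only [dif_pos hi, dif_pos hj]
        refine hcdisj _ _ (fun hcc => hij ?_)
        have : (i:ℕ) = (j:ℕ) := by
          have := congrArg Fin.val hcc
          simpa using this
        exact Fin.ext this
      · simp only [dif_pos hi, dif_neg hj]
        rw [Set.disjoint_left]
        intro z hz1 hz2
        exact key i hi z hz1 hz2
      · simp only [dif_pos hj, dif_neg hi]
        rw [Set.disjoint_left]
        intro z hz1 hz2
        exact key j hj z hz2 hz1
      · exact absurd (Fin.ext (by omega : (i:ℕ) = (j:ℕ))) hij
  have hdiam : ∀ j, EMetric.diam (t j) ≤ r := by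
    intro j
    rw [htdef]
    by_cases h : j < n₀
    · simp only [dif_pos h]
      exact (diam_ball_le _ ρ).trans hρr
    · simp only [dif_neg h, EMetric.diam_empty]
      exact EMetric.diam_empty.le.trans (zero_le : (0:ℝ≥0∞) ≤ r)
  refine le_trans (iInf_le_of_le t (iInf_le_of_le hcov (iInf_le_of_le hdiam le_rfl))) ?_
  have hterm : ∀ j, (⨆ _ : (t j).Nonempty, EMetric.diam (t j) ^ s)
      ≤ (if j < n₀ then cρ else 0) := by
    intro j
    by_cases h : j < n₀
    · rw [if_pos h]
      refine iSup_le fun _ => ?_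
      calc EMetric.diam (t j) ^ s ≤ (ENNReal.ofReal ρ) ^ s := by
            apply ENNReal.rpow_le_rpow _ hs
            rw [htdef]; simp only [dif_pos h]
            exact diam_ball_le _ ρ
        _ = cρ := by rw [hcρ, ENNReal.ofReal_rpow_of_pos hρpos]
    · rw [if_neg h, htdef]
      simp only [dif_neg h]
      simp [Set.not_nonempty_empty]
  calc ∑' j, (⨆ _ : (t j).Nonempty, EMetric.diam (t j) ^ s)
      ≤ ∑' j, (if j < n₀ then cρ else 0) := ENNReal.tsum_le_tsum hterm
    _ = ∑ j ∈ Finset.range n₀, (if j < n₀ then cρ else 0) :=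
        tsum_eq_sum (fun j hj => if_neg (fun h => hj (Finset.mem_range.mpr h)))
    _ = (n₀ : ℝ≥0∞) * cρ := by
        rw [Finset.sum_congr rfl (fun j hj => if_pos (Finset.mem_range.mp hj)),
          Finset.sum_const, Finset.card_range, nsmul_eq_mul]
    _ ≤ prePack (aSharp alphaInv) s δ A :=
        packing_le_prePack A s δ ρ hρpos hρδ n₀ c hcmem hcdisj

theorem packDim_top : packDim (aSharp alphaInv : SS mTwo → SS mTwo → ℝ) = ⊤ := by
  rw [packDim, sInf_eq_top]
  rintro l ⟨s, hs0, rfl, hP⟩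
  exfalso
  borelize (SS mTwo)
  have hμ : μH[s] (Set.univ : Set (SS mTwo)) = ⊤ := hmeasure_top hs0
  have h1 : packMeasure (aSharp alphaInv : SS mTwo → SS mTwo → ℝ) s Set.univ < 1 := by rw [hP]; norm_num
  rw [packMeasure] at h1
  obtain ⟨S, hS⟩ := iInf_lt_iff.mp h1
  obtain ⟨hcov, hlt⟩ := iInf_lt_iff.mp hS
  have h2 : μH[s] (Set.univ : Set (SS mTwo)) ≤ ∑' i, prePack0 (aSharp alphaInv : SS mTwo → SS mTwo → ℝ) s (S i) :=
    calc μH[s] (Set.univ : Set (SS mTwo)) ≤ μH[s] (⋃ i, S i) := measure_mono hcov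
      _ ≤ ∑' i, μH[s] (S i) := measure_iUnion_le S
      _ ≤ _ := ENNReal.tsum_le_tsum (fun i => hmeas_le_prePack0 hs0 (S i))
  rw [hμ] at h2
  have h3 : (⊤ : ℝ≥0∞) < 1 := lt_of_le_of_lt h2 hlt
  simp at h3

/-! ### Upper box dimension -/

lemma log_growth (b : ℕ) : ∀ᶠ j : ℕ in atTop,
    (b:ℝ) * Real.log ((j:ℝ)+2) ≤ ((j:ℝ)+1) * Real.log 2 := by
  have hlog2 : (0:ℝ) < Real.log 2 := Real.log_pos one_lt_two
  set C : ℝ := Real.log 2 / (2*((b:ℝ)+1)) with hC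
  have hCpos : 0 < C := div_pos hlog2 (by positivity)
  have hx : Tendsto (fun j : ℕ => (j:ℝ)+2) atTop atTop :=
    tendsto_atTop_add_const_right atTop 2 tendsto_natCast_atTop_atTop
  have hlog := (Real.tendsto_pow_log_div_mul_add_atTop 1 0 1 one_ne_zero).comp hx
  have hev : ∀ᶠ j : ℕ in atTop,
      Real.log ((j:ℝ)+2) ^ 1 / (1*((j:ℝ)+2)+0) < C := hlog (Iio_mem_nhds hCpos)
  filter_upwards [hev] with j hj
  have hj2 : (0:ℝ) < (j:ℝ)+2 := by positivity
  have h5 : Real.log ((j:ℝ)+2) < C * ((j:ℝ)+2) := by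
    rw [pow_one, one_mul, add_zero] at hj
    exact (div_lt_iff₀ hj2).mp hj
  have hb0 : (0:ℝ) ≤ (b:ℝ) := Nat.cast_nonneg b
  have hbC : (b:ℝ) * C ≤ Real.log 2 / 2 := by
    rw [hC, mul_div_assoc']
    rw [div_le_div_iff₀ (by positivity) (by norm_num)]
    nlinarith
  have hlogj : 0 ≤ Real.log ((j:ℝ)+2) := Real.log_nonneg (by linarith)
  calc (b:ℝ) * Real.log ((j:ℝ)+2) ≤ (b:ℝ) * (C * ((j:ℝ)+2)) :=
        mul_le_mul_of_nonneg_left h5.le hb0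
    _ = ((b:ℝ) * C) * ((j:ℝ)+2) := by ring
    _ ≤ (Real.log 2 / 2) * ((j:ℝ)+2) := mul_le_mul_of_nonneg_right hbC (by positivity)
    _ ≤ ((j:ℝ)+1) * Real.log 2 := by nlinarith

theorem upperBoxDim_top : upperBoxDim (aSharp alphaInv : SS mTwo → SS mTwo → ℝ) = ⊤ := by
  rw [upperBoxDim]
  by_contra h
  obtain ⟨b, hb⟩ := ENNReal.exists_nat_gt h
  refine absurd (le_limsup_of_frequently_le' ?_) (not_le.mpr hb)
  have hseq : Tendsto (fun j : ℕ => 1/((j:ℝ)+2)) atTop (𝓝[Set.Ioo (0:ℝ) 1] 0) := by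
    apply tendsto_nhdsWithin_of_tendsto_nhds_of_eventually_within
    · have h1 := (tendsto_one_div_add_atTop_nhds_zero_nat (𝕜 := ℝ)).comp (tendsto_add_atTop_nat 1)
      refine h1.congr fun j => ?_
      simp only [Function.comp_apply]
      push_cast
      ring_nf
    · refine Filter.Eventually.of_forall (fun j => ⟨by positivity, ?_⟩)
      rw [div_lt_one (by positivity)]
      have : (0:ℝ) ≤ (j:ℝ) := Nat.cast_nonneg j
      linarith
  refine hseq.frequently (Filter.Eventually.frequently ?_)
  filter_upwards [log_growth b] with j hj
  show (b : ℝ≥0∞) ≤ boxFn (aSharp alphaInv : SS mTwo → SS mTwo → ℝ) (1/((j:ℝ)+2))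
  rw [boxFn]
  by_cases hcn : coverNum (aSharp alphaInv : SS mTwo → SS mTwo → ℝ) Set.univ (1/((j:ℝ)+2)) = ⊤
  · rw [if_pos hcn]; exact le_top
  rw [if_neg hcn]
  have hlow : (2:ℝ≥0∞)^(j+1) ≤ coverNum (aSharp alphaInv : SS mTwo → SS mTwo → ℝ)
      Set.univ (1/((j:ℝ)+2)) := by
    apply coverNum_lower j
    apply one_div_lt_one_div_of_lt (by positivity)
    linarith
  set T := (coverNum (aSharp alphaInv : SS mTwo → SS mTwo → ℝ) Set.univ (1/((j:ℝ)+2))).toReal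
    with hT
  have hTge : (2:ℝ)^(j+1) ≤ T := by
    have h1 := ENNReal.toReal_mono hcn hlow
    rw [← hT] at h1
    calc (2:ℝ)^(j+1) = ((2:ℝ≥0∞)^(j+1)).toReal := by simp
      _ ≤ T := h1
  have hTpos : (0:ℝ) < T := lt_of_lt_of_le (by positivity) hTge
  have hlogr : -Real.log (1/((j:ℝ)+2)) = Real.log ((j:ℝ)+2) := by
    rw [one_div, Real.log_inv, neg_neg]
  have hlogT : ((j:ℝ)+1)*Real.log 2 ≤ Real.log T := by
    calc ((j:ℝ)+1)*Real.log 2 = Real.log ((2:ℝ)^(j+1)) := by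
          rw [Real.log_pow]
          push_cast
          ring
      _ ≤ Real.log T := Real.log_le_log (by positivity) hTge
  have hkey : (b:ℝ) ≤ Real.log T / (-Real.log (1/((j:ℝ)+2))) := by
    rw [hlogr, le_div_iff₀ (Real.log_pos (by push_cast; linarith [Nat.cast_nonneg (α := ℝ) j]))]
    calc (b:ℝ) * Real.log ((j:ℝ)+2) ≤ ((j:ℝ)+1)*Real.log 2 := hj
      _ ≤ Real.log T := hlogT
  calc (b:ℝ≥0∞) = ENNReal.ofReal (b:ℝ) := (ENNReal.ofReal_natCast b).symm
    _ ≤ _ := ENNReal.ofReal_le_ofReal hkey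

/-! ### Assouad dimension -/

lemma pt0ball : {y : SS mTwo | aSharp alphaInv (fun _ => (0 : Fin 2)) y ≤ 1} = Set.univ := by
  ext y
  simp only [Set.mem_setOf_eq, Set.mem_univ, iff_true]
  exact dd_le_one _ y

theorem assouadDim_top : assouadDim (aSharp alphaInv : SS mTwo → SS mTwo → ℝ) = ⊤ := by
  rw [assouadDim, sInf_eq_top]
  rintro l ⟨lam, hlam, rfl, C, hC, hbnd⟩
  exfalso
  set N := ⌈lam⌉₊ with hN
  set K : ℝ := ((N:ℝ)+1)^(N+1) with hK
  set j := ⌈C*K⌉₊ + 1 with hj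
  have hKpos : 0 < K := by positivity
  have hCK : C*K < (j:ℝ)+2 := by
    have h1 := Nat.le_ceil (C*K)
    have h2 : ((⌈C*K⌉₊ : ℝ)) < (j:ℝ)+2 := by
      rw [hj]
      push_cast
      linarith
    linarith
  have hnat : (((j+2:ℕ))^(N+1) : ℝ) ≤ (((N+1:ℕ))^(N+1) : ℝ) * ((2:ℝ))^(j+1) := by
    exact_mod_cast nat_pow_le (N+1) (j+1) (Nat.succ_pos N)
  have hpow : ((j:ℝ)+2)^(N+1) ≤ K * 2^(j+1) := by
    rw [hK]
    push_cast at hnat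
    convert hnat using 2 <;> (push_cast; ring)
  have hr0 : (0:ℝ) < 1/((j:ℝ)+2) := by positivity
  have hrR : 1/((j:ℝ)+2) < 1 := by
    rw [div_lt_one (by positivity)]
    have : (0:ℝ) ≤ (j:ℝ) := Nat.cast_nonneg j
    linarith
  have happ := hbnd (fun _ => (0 : Fin 2)) 1 (1/((j:ℝ)+2)) hr0 hrR
  erw [pt0ball] at happ
  have hlow : (2:ℝ≥0∞)^(j+1) ≤ coverNum (aSharp alphaInv : SS mTwo → SS mTwo → ℝ)
      Set.univ (1/((j:ℝ)+2)) := by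
    apply coverNum_lower j
    apply one_div_lt_one_div_of_lt (by positivity)
    linarith
  have hchain : (2:ℝ≥0∞)^(j+1) ≤ ENNReal.ofReal (C * (1/(1/((j:ℝ)+2)))^lam) :=
    hlow.trans happ
  rw [one_div_one_div] at hchain
  have hRb : C * ((j:ℝ)+2)^lam < 2^(j+1) := by
    have hbase : (1:ℝ) ≤ (j:ℝ)+2 := by
      have : (0:ℝ) ≤ (j:ℝ) := Nat.cast_nonneg j
      linarith
    have h1 : ((j:ℝ)+2)^lam ≤ ((j:ℝ)+2)^(N:ℕ) := by
      calc ((j:ℝ)+2)^lam ≤ ((j:ℝ)+2)^((N:ℕ):ℝ) :=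
            Real.rpow_le_rpow_of_exponent_le hbase (Nat.le_ceil lam)
        _ = ((j:ℝ)+2)^(N:ℕ) := Real.rpow_natCast _ N
    have hT : (0:ℝ) < 2^(j+1) := by positivity
    have hj2 : (0:ℝ) < (j:ℝ)+2 := by positivity
    have hpN : (0:ℝ) ≤ ((j:ℝ)+2)^(N:ℕ) := by positivity
    have e1 : C * (((j:ℝ)+2)^(N:ℕ) * ((j:ℝ)+2)) ≤ C * (K * 2^(j+1)) := by
      apply mul_le_mul_of_nonneg_left _ hC.le
      rw [← pow_succ]
      exact hpow
    have e2 : C*K*2^(j+1) < ((j:ℝ)+2) * 2^(j+1) := mul_lt_mul_of_pos_right hCK hT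
    have e4 : C * ((j:ℝ)+2)^(N:ℕ) < 2^(j+1) := by
      rw [← mul_lt_mul_iff_left₀ hj2]
      nlinarith
    calc C*((j:ℝ)+2)^lam ≤ C*((j:ℝ)+2)^(N:ℕ) := mul_le_mul_of_nonneg_left h1 hC.le
      _ < _ := e4
  have hofReal : ENNReal.ofReal (C*((j:ℝ)+2)^lam) < ENNReal.ofReal ((2:ℝ)^(j+1)) :=
    (ENNReal.ofReal_lt_ofReal_iff (by positivity)).mpr hRb
  have hfinal : (2:ℝ≥0∞)^(j+1) < (2:ℝ≥0∞)^(j+1) := by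
    refine lt_of_le_of_lt hchain (lt_of_lt_of_le hofReal ?_)
    rw [ENNReal.ofReal_pow (by norm_num)]
    simp
  exact lt_irrefl _ hfinal

/-- For `α(n) = 1/(n+1)`, the Hausdorff dimension of `(S(2), α♯)` is infinite, and hence so
are its packing, upper box and Assouad dimensions. -/
theorem stmt14 :
    @dimH (SS mTwo) (@MetricSpace.toEMetricSpace (SS mTwo) M14) Set.univ = ⊤ ∧
    packDim (aSharp alphaInv : SS mTwo → SS mTwo → ℝ) = ⊤ ∧
    upperBoxDim (aSharp alphaInv : SS mTwo → SS mTwo → ℝ) = ⊤ ∧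
    assouadDim (aSharp alphaInv : SS mTwo → SS mTwo → ℝ) = ⊤ := by
  refine ⟨dimH_SS_top, packDim_top, upperBoxDim_top, assouadDim_top⟩
end

section
/- Let (X,d) be an ultrametric space with at least two points, and ε > 0. Let d_ε = (1+ε)d. Then d_ε is an ultrametric on X, the Gromov–Hausdorff distance between (X,d) and (X,d_ε) is at most ε·diam(X,d), and if additionally X is bounded then the non-Archimedean Gromov–Hausdorff distance between (X,d) and (X,d_ε) equals (1+ε)·diam(X,d). -/
open Metric Set Filter
open scoped ENNReal

section Glue
variable {X : Type} [MetricSpace X]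

noncomputable def myGlueDist (c r : ℝ) : X ⊕ X → X ⊕ X → ℝ
  | .inl a, .inl b => dist a b
  | .inl a, .inr b => dist a b + r
  | .inr a, .inl b => dist a b + r
  | .inr a, .inr b => c * dist a b

noncomputable def myGlueMetric (c r : ℝ) (hc : 1 ≤ c) (hr : 0 < r)
    (hb : ∀ a b : X, c * dist a b ≤ dist a b + r) : MetricSpace (X ⊕ X) where
  dist := myGlueDist c r
  dist_self p := by rcases p with a | a <;> simp [myGlueDist]
  dist_comm p q := by
    rcases p with a | a <;> rcases q with b | b <;> simp [myGlueDist, dist_comm]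
  dist_triangle p q s := by
    have h0 : (0:ℝ) ≤ c := by linarith
    rcases p with a | a <;> rcases q with b | b <;> rcases s with e | e <;>
        simp only [myGlueDist] <;>
        have ht := dist_triangle a b e
    · linarith
    · linarith
    · have := dist_nonneg (x := a) (y := e); linarith
    · have h2 : dist b e ≤ c * dist b e := le_mul_of_one_le_left dist_nonneg hc
      linarith
    · linarith
    · have h2 := hb a e; linarith
    · have h2 : dist a b ≤ c * dist a b := le_mul_of_one_le_left dist_nonneg hc
      linarith
    · calc c * dist a e ≤ c * (dist a b + dist b e) :=
          mul_le_mul_of_nonneg_left ht h0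
        _ = c * dist a b + c * dist b e := mul_add _ _ _
  eq_of_dist_eq_zero {p q} h := by
    rcases p with a | a <;> rcases q with b | b <;> simp only [myGlueDist] at h
    · rw [eq_of_dist_eq_zero h]
    · exfalso; have := dist_nonneg (x := a) (y := b); linarith
    · exfalso; have := dist_nonneg (x := a) (y := b); linarith
    · rcases mul_eq_zero.mp h with h' | h'
      · exfalso; linarith
      · rw [eq_of_dist_eq_zero h']

noncomputable def myUGlueDist (c R : ℝ) : X ⊕ X → X ⊕ X → ℝ
  | .inl a, .inl b => dist a b
  | .inl _, .inr _ => R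
  | .inr _, .inl _ => R
  | .inr a, .inr b => c * dist a b

lemma myUGlueDist_ultra (c R : ℝ) (hc : 0 ≤ c)
    (hu : ∀ a b e : X, dist a e ≤ max (dist a b) (dist b e))
    (hb1 : ∀ a b : X, dist a b ≤ R) (hb2 : ∀ a b : X, c * dist a b ≤ R)
    (p q s : X ⊕ X) :
    myUGlueDist c R p s ≤ max (myUGlueDist c R p q) (myUGlueDist c R q s) := by
  rcases p with a | a <;> rcases q with b | b <;> rcases s with e | e <;>
      simp only [myUGlueDist]
  · exact hu a b e
  · exact le_max_right _ _
  · exact le_max_of_le_left (hb1 a e)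
  · exact le_max_left _ _
  · exact le_max_left _ _
  · exact le_max_of_le_left (hb2 a e)
  · exact le_max_right _ _
  · calc c * dist a e ≤ c * max (dist a b) (dist b e) :=
        mul_le_mul_of_nonneg_left (hu a b e) hc
      _ = max (c * dist a b) (c * dist b e) := mul_max_of_nonneg _ _ hc

noncomputable def myUGlueMetric (c R : ℝ) (hc : 1 ≤ c) (hR : 0 < R)
    (hu : ∀ a b e : X, dist a e ≤ max (dist a b) (dist b e))
    (hb1 : ∀ a b : X, dist a b ≤ R) (hb2 : ∀ a b : X, c * dist a b ≤ R) :
    MetricSpace (X ⊕ X) where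
  dist := myUGlueDist c R
  dist_self p := by rcases p with a | a <;> simp [myUGlueDist]
  dist_comm p q := by
    rcases p with a | a <;> rcases q with b | b <;> simp [myUGlueDist, dist_comm]
  dist_triangle p q s := by
    have h0 : (0:ℝ) ≤ c := by linarith
    have hnn : ∀ u v : X ⊕ X, 0 ≤ myUGlueDist c R u v := by
      intro u v
      rcases u with a | a <;> rcases v with b | b <;> simp only [myUGlueDist]
      · exact dist_nonneg
      · exact hR.le
      · exact hR.le
      · positivity
    calc myUGlueDist c R p s ≤ max (myUGlueDist c R p q) (myUGlueDist c R q s) :=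
          myUGlueDist_ultra c R h0 hu hb1 hb2 p q s
      _ ≤ myUGlueDist c R p q + myUGlueDist c R q s :=
          max_le (le_add_of_nonneg_right (hnn q s)) (le_add_of_nonneg_left (hnn p q))
  eq_of_dist_eq_zero {p q} h := by
    rcases p with a | a <;> rcases q with b | b <;> simp only [myUGlueDist] at h
    · rw [eq_of_dist_eq_zero h]
    · exfalso; linarith
    · exfalso; linarith
    · rcases mul_eq_zero.mp h with h' | h'
      · exfalso; linarith
      · rw [eq_of_dist_eq_zero h']

end Glue

lemma ultra_hausdorff_lower {Z : Type} [MetricSpace Z]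
    (hu : ∀ x y z : Z, edist x z ≤ max (edist x y) (edist y z))
    {A B : Set Z} (h : EMetric.diam A < EMetric.diam B) :
    EMetric.diam B ≤ EMetric.hausdorffEdist A B := by
  by_contra hlt
  push_neg at hlt
  set t := max (EMetric.hausdorffEdist A B) (EMetric.diam A) with ht
  have htlt : t < EMetric.diam B := max_lt hlt h
  have hex : ∃ b ∈ B, ∃ b' ∈ B, t < edist b b' := by
    by_contra hno
    push_neg at hno
    exact absurd (EMetric.diam_le hno) (not_le.mpr htlt)
  obtain ⟨b, hb, b', hb', hbb⟩ := hex
  have h1 : EMetric.infEdist b A < edist b b' :=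
    lt_of_le_of_lt (le_trans (EMetric.infEdist_le_hausdorffEdist_of_mem hb)
      (by rw [EMetric.hausdorffEdist_comm]; exact le_max_left _ _)) hbb
  have h2 : EMetric.infEdist b' A < edist b b' :=
    lt_of_le_of_lt (le_trans (EMetric.infEdist_le_hausdorffEdist_of_mem hb')
      (by rw [EMetric.hausdorffEdist_comm]; exact le_max_left _ _)) hbb
  obtain ⟨a, ha, hba⟩ := EMetric.infEdist_lt_iff.mp h1
  obtain ⟨a', ha', hba'⟩ := EMetric.infEdist_lt_iff.mp h2
  have haa : edist a a' < edist b b' :=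
    lt_of_le_of_lt (le_trans (EMetric.edist_le_diam_of_mem ha ha')
      (le_max_right _ _)) hbb
  have : edist b b' ≤ max (edist b a) (max (edist a a') (edist a' b')) :=
    le_trans (hu b a b') (max_le_max le_rfl (hu a a' b'))
  have hfin : max (edist b a) (max (edist a a') (edist a' b')) < edist b b' := by
    rw [edist_comm a' b'] at *
    exact max_lt hba (max_lt haa hba')
  exact absurd (lt_of_le_of_lt this hfin) (lt_irrefl _)

lemma diam_range_scale {X Z : Type} [MetricSpace X] [MetricSpace Z] {f : X → Z} {k : ℝ≥0∞}
    (hk0 : k ≠ 0) (hkt : k ≠ ⊤)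
    (hf : ∀ a b : X, edist (f a) (f b) = k * edist a b) :
    EMetric.diam (Set.range f) = k * EMetric.diam (Set.univ : Set X) := by
  apply le_antisymm
  · apply EMetric.diam_le
    rintro _ ⟨a, rfl⟩ _ ⟨b, rfl⟩
    rw [hf]
    exact mul_le_mul_right (EMetric.edist_le_diam_of_mem (Set.mem_univ a) (Set.mem_univ b)) k
  · rw [mul_comm, ← ENNReal.le_div_iff_mul_le (Or.inl hk0) (Or.inl hkt)]
    apply EMetric.diam_le
    intro a _ b _
    rw [ENNReal.le_div_iff_mul_le (Or.inl hk0) (Or.inl hkt), mul_comm, ← hf]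
    exact EMetric.edist_le_diam_of_mem ⟨a, rfl⟩ ⟨b, rfl⟩
/-- A witness for the Gromov–Hausdorff distance. -/
structure GHWitness (X Y : Type) [MetricSpace X] [MetricSpace Y] : Type 1 where
  Z : Type
  [mZ : MetricSpace Z]
  i : X → Z
  j : Y → Z
  hi : ∀ a b : X, (letI := mZ; dist (i a) (i b)) = dist a b
  hj : ∀ a b : Y, (letI := mZ; dist (j a) (j b)) = dist a b

/-- The Gromov–Hausdorff distance (in `ℝ≥0∞`). -/
noncomputable def ghDist (X Y : Type) [MetricSpace X] [MetricSpace Y] : ℝ≥0∞ :=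
  ⨅ w : GHWitness X Y,
    letI := w.mZ
    EMetric.hausdorffEdist (Set.range w.i) (Set.range w.j)

/-- A witness for the non-Archimedean Gromov–Hausdorff distance: the ambient space is required
to be an ultrametric space. -/
structure UGHWitness (X Y : Type) [MetricSpace X] [MetricSpace Y] : Type 1 where
  Z : Type
  [mZ : MetricSpace Z]
  hultra : ∀ x y z : Z, (letI := mZ; dist x z) ≤ max (letI := mZ; dist x y) (letI := mZ; dist y z)
  i : X → Z
  j : Y → Z
  hi : ∀ a b : X, (letI := mZ; dist (i a) (i b)) = dist a b
  hj : ∀ a b : Y, (letI := mZ; dist (j a) (j b)) = dist a b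

/-- The non-Archimedean Gromov–Hausdorff distance (in `ℝ≥0∞`). -/
noncomputable def uGHDist (X Y : Type) [MetricSpace X] [MetricSpace Y] : ℝ≥0∞ :=
  ⨅ w : UGHWitness X Y,
    letI := w.mZ
    EMetric.hausdorffEdist (Set.range w.i) (Set.range w.j)

/-- The metric space structure obtained by scaling the distance of `X` by a constant `c > 0`. -/
noncomputable def scaledMetric (X : Type) [MetricSpace X] (c : ℝ) (hc : 0 < c) :
    MetricSpace X where
  dist x y := c * dist x y
  dist_self x := by
    show c * dist x x = 0
    simp
  dist_comm x y := by
    show c * dist x y = c * dist y x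
    rw [dist_comm]
  dist_triangle x y z := by
    show c * dist x z ≤ c * dist x y + c * dist y z
    calc c * dist x z ≤ c * (dist x y + dist y z) :=
          mul_le_mul_of_nonneg_left (dist_triangle x y z) hc.le
      _ = c * dist x y + c * dist y z := mul_add c _ _
  eq_of_dist_eq_zero {x y} h := by
    have h2 : c * dist x y = 0 := h
    rcases mul_eq_zero.mp h2 with h' | h'
    · exact absurd h' (ne_of_gt hc)
    · exact eq_of_dist_eq_zero h'

/-- For an ultrametric space `(X,d)` with at least two points and `ε > 0`, the scaled distance
`d_ε = (1+ε)d` is an ultrametric, `d_GH((X,d),(X,d_ε)) ≤ ε·diam(X,d)`, and if `X` is bounded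
then `u_GH((X,d),(X,d_ε)) = (1+ε)·diam(X,d)`. -/
theorem stmt16 (X : Type) [M : MetricSpace X] [IsUltrametricDist X]
    (htwo : ∃ x y : X, x ≠ y) (ε : ℝ) (hε : 0 < ε) :
    (∀ x y z : X, (1 + ε) * dist x z ≤ max ((1 + ε) * dist x y) ((1 + ε) * dist y z)) ∧
    @ghDist X X M (scaledMetric X (1 + ε) (by linarith)) ≤
      ENNReal.ofReal ε * EMetric.diam (Set.univ : Set X) ∧
    (Bornology.IsBounded (Set.univ : Set X) →
      @uGHDist X X M (scaledMetric X (1 + ε) (by linarith)) =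
        ENNReal.ofReal (1 + ε) * EMetric.diam (Set.univ : Set X)) := by
  have hε0 : (0:ℝ) < 1 + ε := by linarith
  have hc1 : (1:ℝ) ≤ 1 + ε := by linarith
  have hu : ∀ a b e : X, dist a e ≤ max (dist a b) (dist b e) :=
    fun a b e => IsUltrametricDist.dist_triangle_max a b e
  refine ⟨?_, ?_, ?_⟩
  · intro x y z
    rw [← mul_max_of_nonneg _ _ hε0.le]
    exact mul_le_mul_of_nonneg_left (hu x y z) hε0.le
  · -- GH distance bound
    by_cases hbdd : Bornology.IsBounded (Set.univ : Set X)
    · obtain ⟨x, y, hxy⟩ := htwo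
      set D := Metric.diam (Set.univ : Set X) with hDdef
      have hD : 0 < D :=
        lt_of_lt_of_le (dist_pos.mpr hxy)
          (Metric.dist_le_diam_of_mem hbdd (mem_univ x) (mem_univ y))
      have hr : 0 < ε * D := by positivity
      have hb : ∀ a b : X, (1 + ε) * dist a b ≤ dist a b + ε * D := by
        intro a b
        have h1 : dist a b ≤ D := Metric.dist_le_diam_of_mem hbdd (mem_univ a) (mem_univ b)
        nlinarith
      letI mZ : MetricSpace (X ⊕ X) := myGlueMetric (1 + ε) (ε * D) hc1 hr hb
      have key : @ghDist X X M (scaledMetric X (1 + ε) hε0) ≤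
          EMetric.hausdorffEdist (Set.range (Sum.inl : X → X ⊕ X))
            (Set.range (Sum.inr : X → X ⊕ X)) :=
        iInf_le _ (@GHWitness.mk X X M (scaledMetric X (1 + ε) hε0) (X ⊕ X) mZ
          Sum.inl Sum.inr (fun a b => rfl) (fun a b => rfl))
      refine le_trans key ?_
      have hedist : ∀ a : X, edist (Sum.inl a : X ⊕ X) (Sum.inr a) = ENNReal.ofReal (ε * D) := by
        intro a
        rw [edist_dist]
        congr 1
        show myGlueDist (1 + ε) (ε * D) (Sum.inl a) (Sum.inr a) = ε * D
        simp [myGlueDist]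
      have hH : EMetric.hausdorffEdist (Set.range (Sum.inl : X → X ⊕ X))
          (Set.range (Sum.inr : X → X ⊕ X)) ≤ ENNReal.ofReal (ε * D) := by
        apply EMetric.hausdorffEdist_le_of_mem_edist
        · rintro _ ⟨a, rfl⟩; exact ⟨Sum.inr a, ⟨a, rfl⟩, (hedist a).le⟩
        · rintro _ ⟨a, rfl⟩
          refine ⟨Sum.inl a, ⟨a, rfl⟩, ?_⟩
          rw [edist_comm]; exact (hedist a).le
      refine le_trans hH ?_
      rw [ENNReal.ofReal_mul hε.le, hDdef, Metric.diam,
        ENNReal.ofReal_toReal hbdd.ediam_ne_top]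
      rfl
    · have : EMetric.diam (Set.univ : Set X) = ⊤ := by
        by_contra h
        exact hbdd (Metric.isBounded_iff_ediam_ne_top.mpr h)
      rw [this, ENNReal.mul_top (ENNReal.ofReal_pos.mpr hε).ne']
      exact le_top
  · -- uGH distance equals (1+ε)·diam
    intro hbdd
    obtain ⟨x, y, hxy⟩ := htwo
    set D := Metric.diam (Set.univ : Set X) with hDdef
    have hD : 0 < D :=
      lt_of_lt_of_le (dist_pos.mpr hxy)
        (Metric.dist_le_diam_of_mem hbdd (mem_univ x) (mem_univ y))
    have hR : 0 < (1 + ε) * D := by positivity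
    have hb1 : ∀ a b : X, dist a b ≤ (1 + ε) * D := by
      intro a b
      have h1 : dist a b ≤ D := Metric.dist_le_diam_of_mem hbdd (mem_univ a) (mem_univ b)
      nlinarith
    have hb2 : ∀ a b : X, (1 + ε) * dist a b ≤ (1 + ε) * D := by
      intro a b
      have h1 : dist a b ≤ D := Metric.dist_le_diam_of_mem hbdd (mem_univ a) (mem_univ b)
      nlinarith
    have hediam : ENNReal.ofReal D = EMetric.diam (Set.univ : Set X) := by
      rw [hDdef, Metric.diam, ENNReal.ofReal_toReal hbdd.ediam_ne_top]
      rfl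
    have heD0 : EMetric.diam (Set.univ : Set X) ≠ 0 := by
      refine (lt_of_lt_of_le ?_
        (EMetric.edist_le_diam_of_mem (mem_univ x) (mem_univ y))).ne'
      exact edist_pos.mpr hxy
    have heDt : EMetric.diam (Set.univ : Set X) ≠ ⊤ := hbdd.ediam_ne_top
    apply le_antisymm
    · -- upper bound via glued ultrametric witness
      letI mU : MetricSpace (X ⊕ X) := myUGlueMetric (1 + ε) ((1 + ε) * D) hc1 hR hu hb1 hb2
      have key : @uGHDist X X M (scaledMetric X (1 + ε) hε0) ≤
          EMetric.hausdorffEdist (Set.range (Sum.inl : X → X ⊕ X))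
            (Set.range (Sum.inr : X → X ⊕ X)) :=
        iInf_le _ (@UGHWitness.mk X X M (scaledMetric X (1 + ε) hε0) (X ⊕ X) mU
          (myUGlueDist_ultra (1 + ε) ((1 + ε) * D) hε0.le hu hb1 hb2)
          Sum.inl Sum.inr (fun a b => rfl) (fun a b => rfl))
      refine le_trans key ?_
      have hedist : ∀ a : X, edist (Sum.inl a : X ⊕ X) (Sum.inr a) =
          ENNReal.ofReal ((1 + ε) * D) := by
        intro a
        rw [edist_dist]
        congr 1
      have hH : EMetric.hausdorffEdist (Set.range (Sum.inl : X → X ⊕ X))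
          (Set.range (Sum.inr : X → X ⊕ X)) ≤ ENNReal.ofReal ((1 + ε) * D) := by
        apply EMetric.hausdorffEdist_le_of_mem_edist
        · rintro _ ⟨a, rfl⟩; exact ⟨Sum.inr a, ⟨a, rfl⟩, (hedist a).le⟩
        · rintro _ ⟨a, rfl⟩
          refine ⟨Sum.inl a, ⟨a, rfl⟩, ?_⟩
          rw [edist_comm]; exact (hedist a).le
      refine le_trans hH ?_
      rw [ENNReal.ofReal_mul hε0.le, hediam]
    · -- lower bound
      refine le_iInf fun w : @UGHWitness X X M (scaledMetric X (1 + ε) hε0) => ?_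
      cases w with
      | @mk Z mZ hultra i j hi hj => ?_
      letI := mZ
      have hue : ∀ p q s : Z, edist p s ≤ max (edist p q) (edist q s) := by
        intro p q s
        rw [edist_dist, edist_dist, edist_dist]
        refine le_trans (ENNReal.ofReal_le_ofReal (hultra p q s)) ?_
        rcases le_total (dist p q) (dist q s) with h | h <;>
          simp [max_eq_right, max_eq_left, h, le_max_left, le_max_right,
            ENNReal.ofReal_le_ofReal h]
      have hdiamA : EMetric.diam (Set.range i) = EMetric.diam (Set.univ : Set X) := by
        have := diam_range_scale (X := X) (Z := Z) (f := i) (k := 1)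
          one_ne_zero ENNReal.one_ne_top
          (fun a b => by rw [edist_dist, hi, one_mul, edist_dist])
        rwa [one_mul] at this
      have hdiamB : EMetric.diam (Set.range j) =
          ENNReal.ofReal (1 + ε) * EMetric.diam (Set.univ : Set X) := by
        refine diam_range_scale (X := X) (Z := Z) (f := j) (k := ENNReal.ofReal (1 + ε))
          (ENNReal.ofReal_pos.mpr hε0).ne' ENNReal.ofReal_ne_top ?_
        intro a b
        rw [edist_dist, hj]
        show ENNReal.ofReal ((1 + ε) * dist a b) = _
        rw [ENNReal.ofReal_mul hε0.le, edist_dist]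
      have hstrict : EMetric.diam (Set.range i) < EMetric.diam (Set.range j) := by
        rw [hdiamA, hdiamB]
        conv_lhs => rw [← one_mul (EMetric.diam (Set.univ : Set X))]
        refine (ENNReal.mul_lt_mul_iff_left heD0 heDt).mpr ?_
        rw [← ENNReal.ofReal_one]
        exact (ENNReal.ofReal_lt_ofReal_iff hε0).mpr (by linarith)
      have hfin := ultra_hausdorff_lower hue hstrict
      rw [hdiamB] at hfin
      exact hfin
end
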